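/- arXiv:1904.04059 — 6 statements merged into one kernel-verified Lean document; each statement's English description precedes it below -/
import Mathlib

section
/- Let a₁, a₂ be complex numbers with 0 < |a₁| ≤ |a₂| < 1 such that a₁^k ≠ a₂^l for every pair of natural numbers (k, l) ≠ (0, 0). Let P, Q : ℂ × ℂ → ℂ be entire functions (complex differentiable on all of ℂ²), with Q not identically zero, satisfying P(a₁ z₁, a₂ z₂) · Q(z₁, z₂) = P(z₁, z₂) · Q(a₁ z₁, a₂ z₂) for all (z₁, z₂) ∈ ℂ². Then there exists λ ∈ ℂ such that P(z₁, z₂) = λ · Q(z₁, z₂) for all (z₁, z₂) ∈ ℂ². -/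
/-!
Expand entire functions on `ℂ²` at the origin into double Taylor series: power series in `z₁`
whose coefficients are power series in `z₂`, an integral domain. The substitution
`σ : (z₁, z₂) ↦ (a₁ z₁, a₂ z₂)` multiplies the coefficient of `z₁ ^ k * z₂ ^ l` by the weight
`a₁ ^ k * a₂ ^ l`, and non-resonance together with `|a₁|, |a₂| < 1` makes these weights pairwise
distinct. Choose `λ` so that `R = P - λ Q` has no term at the lexicographically lowest monomial of
`Q`. Comparing lowest terms on both sides of `σ R · Q = R · σ Q` shows that, unless `R = 0`, the
lowest monomials of `R` and `Q` have the same weight, hence coincide, contradicting the choice of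
`λ`. So the Taylor series of `P - λ Q` vanishes, and `P = λ Q`.
-/

open Complex Metric Filter PowerSeries
open scoped Real

namespace PowerSeries

theorem coeff_add_mul_of_forall_lt_eq_zero {R : Type*} [Semiring R] {φ ψ : R⟦X⟧} {m n : ℕ}
    (hφ : ∀ i < m, coeff i φ = 0) (hψ : ∀ j < n, coeff j ψ = 0) :
    coeff (m + n) (φ * ψ) = coeff m φ * coeff n ψ := by
  rw [coeff_mul, Finset.sum_eq_single_of_mem (m, n) (by simp)]
  rintro ⟨i, j⟩ hij hne
  rw [Finset.HasAntidiagonal.mem_antidiagonal] at hij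
  rcases lt_or_ge i m with hi | hi
  · rw [hφ i hi, zero_mul]
  · rw [hψ j (by grind), mul_zero]

section Rescale₂

variable {R : Type*} [CommSemiring R]

-- `R⟦X⟧⟦X⟧` is read as power series in `X` with coefficients in `R⟦Y⟧`;
-- `rescale₂ a b` substitutes `a X` for `X` and `b Y` for `Y`.
noncomputable def rescale₂ (a b : R) : R⟦X⟧⟦X⟧ →+* R⟦X⟧⟦X⟧ :=
  (rescale (C a)).comp (map (rescale b))

theorem coeff_coeff_rescale₂ (a b : R) (φ : R⟦X⟧⟦X⟧) (k l : ℕ) :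
    coeff l (coeff k (rescale₂ a b φ)) = a ^ k * b ^ l * coeff l (coeff k φ) := by
  simp [rescale₂, coeff_rescale, coeff_map, ← map_pow, coeff_C_mul, mul_assoc]

theorem rescale₂_C_C (a b c : R) : rescale₂ a b (C (C c)) = C (C c) := by
  ext k l
  rw [coeff_coeff_rescale₂]
  rcases eq_or_ne k 0 with rfl | hk
  · rcases eq_or_ne l 0 with rfl | hl
    · simp
    · simp [coeff_C, hl]
  · simp [coeff_C, hk]

theorem coeff_coeff_rescale₂_mul (a b : R) {φ ψ : R⟦X⟧⟦X⟧}
    {m n i j : ℕ} (hφ : ∀ k < m, coeff k φ = 0) (hψ : ∀ k < n, coeff k ψ = 0)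
    (hφm : ∀ l < i, coeff l (coeff m φ) = 0) (hψn : ∀ l < j, coeff l (coeff n ψ) = 0) :
    coeff (i + j) (coeff (m + n) (rescale₂ a b φ * ψ)) =
      a ^ m * b ^ i * (coeff i (coeff m φ) * coeff j (coeff n ψ)) := by
  have hφ' : ∀ k < m, coeff k (rescale₂ a b φ) = 0 := fun k hk => by
    ext l; simp [coeff_coeff_rescale₂, hφ k hk]
  have hφm' : ∀ l < i, coeff l (coeff m (rescale₂ a b φ)) = 0 := fun l hl => by
    simp [coeff_coeff_rescale₂, hφm l hl]
  rw [coeff_add_mul_of_forall_lt_eq_zero hφ' hψ, coeff_add_mul_of_forall_lt_eq_zero hφm' hψn,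
    coeff_coeff_rescale₂, mul_assoc]

theorem exists_eq_C_C_mul_of_rescale₂_mul_eq {K : Type*} [Field K] {a b : K}
    (hab : Function.Injective fun kl : ℕ × ℕ => a ^ kl.1 * b ^ kl.2) {φ ψ : K⟦X⟧⟦X⟧}
    (hψ : ψ ≠ 0) (h : rescale₂ a b φ * ψ = φ * rescale₂ a b ψ) :
    ∃ c : K, φ = C (C c) * ψ := by
  set n := ψ.order.toNat
  set j := (coeff n ψ).order.toNat
  have hψn : coeff j (coeff n ψ) ≠ 0 := coeff_order (coeff_order hψ)
  set c := coeff j (coeff n φ) / coeff j (coeff n ψ)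
  refine ⟨c, sub_eq_zero.mp ?_⟩
  set r := φ - C (C c) * ψ
  have hr : rescale₂ a b r * ψ = r * rescale₂ a b ψ := by
    simp only [r, map_sub, map_mul, rescale₂_C_C]
    linear_combination h
  by_contra hr0
  set m := r.order.toNat
  set i := (coeff m r).order.toNat
  have hrm : coeff i (coeff m r) ≠ 0 := coeff_order (coeff_order hr0)
  -- Compare the coefficients of `X ^ (m + n) * Y ^ (i + j)`, the lexicographically lowest
  -- monomial of both sides of `hr`.
  have hlead := congrArg (fun φ => coeff (i + j) (coeff (m + n) φ)) hr
  rw [coeff_coeff_rescale₂_mul a b (fun k => coeff_of_lt_order_toNat k)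
      (fun k => coeff_of_lt_order_toNat k) (fun l => coeff_of_lt_order_toNat l)
      (fun l => coeff_of_lt_order_toNat l), mul_comm r, add_comm m, add_comm i,
    coeff_coeff_rescale₂_mul a b (fun k => coeff_of_lt_order_toNat k)
      (fun k => coeff_of_lt_order_toNat k) (fun l => coeff_of_lt_order_toNat l)
      (fun l => coeff_of_lt_order_toNat l), mul_comm (coeff j _)] at hlead
  obtain ⟨hmn, hij⟩ := Prod.ext_iff.mp
    (@hab (m, i) (n, j) (mul_right_cancel₀ (mul_ne_zero hrm hψn) hlead))
  apply hrm
  rw [show m = n from hmn, show i = j from hij]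
  change coeff j (coeff n (φ - C (C c) * ψ)) = 0
  rw [map_sub, map_sub, coeff_C_mul, coeff_C_mul, div_mul_cancel₀ _ hψn, sub_self]

end Rescale₂

end PowerSeries

section NonResonance

variable {𝕜 : Type*} [NormedField 𝕜] {a b : 𝕜}

theorem eq_zero_of_pow_mul_pow_eq_one (ha : ‖a‖ < 1) (hb : ‖b‖ < 1) {k l : ℕ}
    (h : a ^ k * b ^ l = 1) : k = 0 ∧ l = 0 := by
  by_contra hkl
  have hlt : ‖a‖ ^ k * ‖b‖ ^ l < 1 := by
    rcases Nat.eq_zero_or_pos k with rfl | hk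
    · simpa using pow_lt_one₀ (norm_nonneg b) hb (by tauto)
    · exact mul_lt_one_of_nonneg_of_lt_one_left (by positivity)
        (pow_lt_one₀ (norm_nonneg a) ha hk.ne') (pow_le_one₀ (norm_nonneg b) hb.le)
  simp [← norm_pow, ← norm_mul, h] at hlt

theorem injective_pow_mul_pow (ha₀ : a ≠ 0) (hb₀ : b ≠ 0) (ha : ‖a‖ < 1) (hb : ‖b‖ < 1)
    (hres : ∀ k l : ℕ, (k, l) ≠ (0, 0) → a ^ k ≠ b ^ l) :
    Function.Injective fun kl : ℕ × ℕ => a ^ kl.1 * b ^ kl.2 := by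
  suffices key : ∀ k l m j : ℕ, m ≤ k → a ^ k * b ^ l = a ^ m * b ^ j → k = m ∧ l = j by
    rintro ⟨k, l⟩ ⟨m, j⟩ h
    rcases le_total m k with hmk | hkm
    · obtain ⟨rfl, rfl⟩ := key k l m j hmk h; rfl
    · obtain ⟨rfl, rfl⟩ := key m j k l hkm h.symm; rfl
  intro k l m j hmk h
  obtain ⟨d, rfl⟩ := Nat.exists_eq_add_of_le hmk
  rcases le_total l j with hlj | hjl
  · obtain ⟨e, rfl⟩ := Nat.exists_eq_add_of_le hlj
    have hde : a ^ d = b ^ e := mul_left_cancel₀ (mul_ne_zero (pow_ne_zero m ha₀)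
      (pow_ne_zero l hb₀)) (by rw [pow_add, pow_add] at h; linear_combination h)
    by_cases h0 : (d, e) = (0, 0)
    · simp_all
    · exact absurd hde (hres d e h0)
  · obtain ⟨e, rfl⟩ := Nat.exists_eq_add_of_le hjl
    have hde : a ^ d * b ^ e = 1 := mul_left_cancel₀ (mul_ne_zero (pow_ne_zero m ha₀)
      (pow_ne_zero j hb₀)) (by rw [pow_add, pow_add] at h; linear_combination h)
    obtain ⟨rfl, rfl⟩ := eq_zero_of_pow_mul_pow_eq_one ha hb hde
    simp

end NonResonance

noncomputable def taylorAtZero (g : ℂ → ℂ) : ℂ⟦X⟧ :=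
  PowerSeries.mk fun k => (cauchyPowerSeries g 0 1).coeff k

section TaylorAtZero

variable {f g : ℂ → ℂ}

theorem hasSum_taylorAtZero (hg : Differentiable ℂ g) (w : ℂ) :
    HasSum (fun k => coeff k (taylorAtZero g) * w ^ k) (g w) := by
  have h := (hg.hasFPowerSeriesOnBall 0 one_pos).hasSum (y := w) (by simp)
  simpa [taylorAtZero, FormalMultilinearSeries.apply_eq_pow_smul_coeff, mul_comm] using h

theorem summable_norm_taylorAtZero (hg : Differentiable ℂ g) (w : ℂ) :
    Summable fun k => ‖coeff k (taylorAtZero g) * w ^ k‖ := by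
  have hw : (‖w‖₊ : ENNReal) < (cauchyPowerSeries g 0 1).radius :=
    (hg.hasFPowerSeriesOnBall 0 one_pos).r_le.trans_lt' (by simp)
  refine ((cauchyPowerSeries g 0 1).summable_norm_mul_pow hw).congr fun k => ?_
  simp [taylorAtZero, FormalMultilinearSeries.norm_apply_eq_norm_coef]

theorem taylorAtZero_eq_of_hasSum (hg : Differentiable ℂ g) {φ : ℂ⟦X⟧}
    (h : ∀ w, HasSum (fun k => coeff k φ * w ^ k) (g w)) : taylorAtZero g = φ := by
  set p := FormalMultilinearSeries.ofScalars ℂ fun k => coeff k φ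
  have hp : HasFPowerSeriesOnBall g p 0 1 :=
    { r_le := p.le_radius_of_tendsto (l := 0) <| by
        simpa [p, FormalMultilinearSeries.ofScalars_norm] using
          (h 1).summable.tendsto_atTop_zero.norm
      r_pos := one_pos
      hasSum := fun _ => by
        simpa [p, FormalMultilinearSeries.ofScalars_apply_eq, mul_comm] using h _ }
  have hcauchy := hp.hasFPowerSeriesAt.eq_formalMultilinearSeries
    (hg.hasFPowerSeriesOnBall 0 one_pos).hasFPowerSeriesAt
  rw [NNReal.coe_one] at hcauchy
  ext k
  simp [taylorAtZero, ← hcauchy, p]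

theorem taylorAtZero_mul (hf : Differentiable ℂ f) (hg : Differentiable ℂ g) :
    taylorAtZero (fun w => f w * g w) = taylorAtZero f * taylorAtZero g := by
  refine taylorAtZero_eq_of_hasSum (hf.mul hg) fun w => ?_
  have hprod := (summable_norm_sum_mul_antidiagonal_of_summable_norm
    (summable_norm_taylorAtZero hf w) (summable_norm_taylorAtZero hg w)).of_norm.hasSum
  rw [← tsum_mul_tsum_eq_tsum_sum_antidiagonal_of_summable_norm (summable_norm_taylorAtZero hf w)
    (summable_norm_taylorAtZero hg w), (hasSum_taylorAtZero hf w).tsum_eq,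
    (hasSum_taylorAtZero hg w).tsum_eq] at hprod
  refine hprod.congr_fun fun n => ?_
  rw [coeff_mul, Finset.sum_mul]
  refine Finset.sum_congr rfl fun kl hkl => ?_
  rw [← Finset.HasAntidiagonal.mem_antidiagonal.mp hkl, pow_add]
  ring

theorem taylorAtZero_const_mul (hg : Differentiable ℂ g) (c : ℂ) :
    taylorAtZero (fun w => c * g w) = C c * taylorAtZero g :=
  taylorAtZero_eq_of_hasSum (hg.const_mul c) fun w => by
    simpa [mul_assoc] using (hasSum_taylorAtZero hg w).mul_left c

theorem taylorAtZero_sum {ι : Type*} (s : Finset ι) {f : ι → ℂ → ℂ}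
    (hf : ∀ i ∈ s, Differentiable ℂ (f i)) :
    taylorAtZero (fun w => ∑ i ∈ s, f i w) = ∑ i ∈ s, taylorAtZero (f i) :=
  taylorAtZero_eq_of_hasSum (Differentiable.fun_sum hf) fun w => by
    simpa [Finset.sum_mul] using hasSum_sum fun i hi => hasSum_taylorAtZero (hf i hi) w

theorem taylorAtZero_comp_const_mul (hg : Differentiable ℂ g) (b : ℂ) :
    taylorAtZero (fun w => g (b * w)) = rescale b (taylorAtZero g) :=
  taylorAtZero_eq_of_hasSum (hg.comp (differentiable_id.const_mul b)) fun w => by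
    simpa [coeff_rescale, mul_pow, mul_assoc, mul_left_comm] using hasSum_taylorAtZero hg (b * w)

theorem taylorAtZero_zero : taylorAtZero (fun _ => 0) = 0 :=
  taylorAtZero_eq_of_hasSum (differentiable_const 0) fun _ => by simp [hasSum_zero]

theorem eq_of_taylorAtZero_eq (hf : Differentiable ℂ f) (hg : Differentiable ℂ g)
    (h : taylorAtZero f = taylorAtZero g) : f = g :=
  funext fun w => (hasSum_taylorAtZero hf w).unique (h ▸ hasSum_taylorAtZero hg w)

end TaylorAtZero

theorem differentiable_intervalIntegral_mul_comp {γ ψ : ℝ → ℂ} (hγ : Continuous γ)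
    (hψ : Continuous ψ) {F : ℂ × ℂ → ℂ} (hF : Differentiable ℂ F) (a b : ℝ) :
    Differentiable ℂ fun w => ∫ θ in a..b, ψ θ * F (γ θ, w) := by
  intro w₀
  obtain ⟨C, hC⟩ : ∃ C, ∀ p ∈ (γ '' Set.uIcc a b) ×ˢ closedBall w₀ 2, ‖F p‖ ≤ C :=
    ((isCompact_uIcc.image hγ).prod (isCompact_closedBall w₀ 2)).exists_bound_of_continuousOn
      hF.continuous.continuousOn
  have hslice : ∀ z, Differentiable ℂ fun v => F (z, v) := fun z => by fun_prop
  have hderiv : ∀ z w, HasDerivAt (fun v => F (z, v)) (fderiv ℂ F (z, w) (0, 1)) w := fun z w =>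
    (hF (z, w)).hasFDerivAt.comp_hasDerivAt w ((hasDerivAt_const w z).prodMk (hasDerivAt_id w))
  -- Cauchy's estimate on the unit circle around `w` bounds the `w`-derivative on `ball w₀ 1`.
  have hbound : ∀ θ ∈ Set.uIcc a b, ∀ w ∈ ball w₀ 1, ‖fderiv ℂ F (γ θ, w) (0, 1)‖ ≤ C := by
    intro θ hθ w hw
    rw [← (hderiv _ _).deriv]
    simpa using norm_deriv_le_of_forall_mem_sphere_norm_le one_pos (hslice _).diffContOnCl
      fun v hv => hC _ ⟨Set.mem_image_of_mem γ hθ, mem_closedBall.mpr <| by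
        linarith [dist_triangle v w w₀, mem_sphere.mp hv, mem_ball.mp hw]⟩
  have hcont : ∀ w, Continuous fun θ => ψ θ * F (γ θ, w) := fun w =>
    hψ.mul (hF.continuous.comp (hγ.prodMk continuous_const))
  refine (intervalIntegral.hasDerivAt_integral_of_dominated_loc_of_deriv_le
    (F := fun w θ => ψ θ * F (γ θ, w)) (F' := fun w θ => ψ θ * fderiv ℂ F (γ θ, w) (0, 1))
    (bound := fun θ => ‖ψ θ‖ * C) (ball_mem_nhds w₀ one_pos)
    (Eventually.of_forall fun w => (hcont w).aestronglyMeasurable)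
    ((hcont w₀).intervalIntegrable a b)
    (hψ.measurable.mul <| (measurable_fderiv_apply_const ℂ F (0, 1)).comp
      (hγ.measurable.prodMk measurable_const)).aestronglyMeasurable
    (Eventually.of_forall fun θ hθ w hw => ?_)
    ((hψ.norm.mul continuous_const).intervalIntegrable a b)
    (Eventually.of_forall fun θ _ w _ => (hderiv _ _).const_mul (ψ θ))).2.differentiableAt
  rw [norm_mul]
  exact mul_le_mul_of_nonneg_left (hbound θ (Set.uIoc_subset_uIcc hθ) w hw) (norm_nonneg _)

noncomputable def partialTaylorCoeff (F : ℂ × ℂ → ℂ) (k : ℕ) (w : ℂ) : ℂ :=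
  coeff k (taylorAtZero fun z => F (z, w))

theorem differentiable_partialTaylorCoeff {F : ℂ × ℂ → ℂ} (hF : Differentiable ℂ F) (k : ℕ) :
    Differentiable ℂ (partialTaylorCoeff F k) := by
  set ψ : ℝ → ℂ := fun θ =>
    circleMap 0 1 θ * I * ((circleMap 0 1 θ)⁻¹ ^ k * (circleMap 0 1 θ)⁻¹)
  have hψ : Continuous ψ := by
    have hinv := (continuous_circleMap 0 1).inv₀ fun θ => circleMap_ne_center one_ne_zero
    exact ((continuous_circleMap 0 1).mul continuous_const).mul ((hinv.pow k).mul hinv)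
  have hformula : partialTaylorCoeff F k = fun w =>
      (2 * π * I)⁻¹ * ∫ θ in 0..2 * π, ψ θ * F (circleMap 0 1 θ, w) := funext fun w => by
    simp only [partialTaylorCoeff, taylorAtZero, coeff_mk, FormalMultilinearSeries.coeff,
      cauchyPowerSeries]
    simp [ψ, circleIntegral, mul_assoc]
  rw [hformula]
  exact (differentiable_intervalIntegral_mul_comp (continuous_circleMap 0 1) hψ hF 0 _).const_mul _

noncomputable def taylorAtZero₂ (F : ℂ × ℂ → ℂ) : ℂ⟦X⟧⟦X⟧ :=
  PowerSeries.mk fun k => taylorAtZero (partialTaylorCoeff F k)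

section TaylorAtZero₂

variable {F G : ℂ × ℂ → ℂ}

theorem coeff_taylorAtZero₂ (k : ℕ) :
    coeff k (taylorAtZero₂ F) = taylorAtZero (partialTaylorCoeff F k) :=
  coeff_mk _ _

theorem taylorAtZero₂_mul (hF : Differentiable ℂ F) (hG : Differentiable ℂ G) :
    taylorAtZero₂ (fun p => F p * G p) = taylorAtZero₂ F * taylorAtZero₂ G := by
  ext1 K
  have hpartial : partialTaylorCoeff (fun p => F p * G p) K = fun w =>
      ∑ kl ∈ Finset.HasAntidiagonal.antidiagonal K,
        partialTaylorCoeff F kl.1 w * partialTaylorCoeff G kl.2 w :=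
    funext fun w => by
      rw [partialTaylorCoeff, taylorAtZero_mul (by fun_prop) (by fun_prop), coeff_mul]
      rfl
  have hsum := taylorAtZero_sum (Finset.HasAntidiagonal.antidiagonal K)
    (f := fun kl w => partialTaylorCoeff F kl.1 w * partialTaylorCoeff G kl.2 w) fun kl _ =>
      (differentiable_partialTaylorCoeff hF kl.1).mul (differentiable_partialTaylorCoeff hG kl.2)
  rw [coeff_mul, coeff_taylorAtZero₂, hpartial, hsum]
  refine Finset.sum_congr rfl fun kl _ => ?_
  rw [coeff_taylorAtZero₂, coeff_taylorAtZero₂, taylorAtZero_mul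
    (differentiable_partialTaylorCoeff hF _) (differentiable_partialTaylorCoeff hG _)]

theorem taylorAtZero₂_const_mul (hF : Differentiable ℂ F) (c : ℂ) :
    taylorAtZero₂ (fun p => c * F p) = C (C c) * taylorAtZero₂ F := by
  ext1 k
  have hpartial : partialTaylorCoeff (fun p => c * F p) k = fun w => c * partialTaylorCoeff F k w :=
    funext fun w => by
      rw [partialTaylorCoeff, taylorAtZero_const_mul (by fun_prop), coeff_C_mul]
      rfl
  rw [coeff_C_mul, coeff_taylorAtZero₂, coeff_taylorAtZero₂, hpartial,
    taylorAtZero_const_mul (differentiable_partialTaylorCoeff hF k)]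

theorem eq_of_taylorAtZero₂_eq (hF : Differentiable ℂ F) (hG : Differentiable ℂ G)
    (h : taylorAtZero₂ F = taylorAtZero₂ G) : F = G := by
  have hpartial : ∀ k, partialTaylorCoeff F k = partialTaylorCoeff G k := fun k =>
    eq_of_taylorAtZero_eq (differentiable_partialTaylorCoeff hF k)
      (differentiable_partialTaylorCoeff hG k) <| by
        rw [← coeff_taylorAtZero₂, ← coeff_taylorAtZero₂, h]
  funext ⟨z, w⟩
  have hslice := eq_of_taylorAtZero_eq (f := fun z => F (z, w)) (g := fun z => G (z, w))
    (by fun_prop) (by fun_prop) (PowerSeries.ext fun k => congrFun (hpartial k) w)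
  exact congrFun hslice z

theorem taylorAtZero₂_zero : taylorAtZero₂ (fun _ => 0) = 0 := by
  ext1 k
  have hpartial : partialTaylorCoeff (fun _ => 0) k = fun _ => 0 :=
    funext fun w => by rw [partialTaylorCoeff, taylorAtZero_zero, map_zero]
  rw [coeff_taylorAtZero₂, hpartial, taylorAtZero_zero, map_zero]

theorem taylorAtZero₂_comp_mul (hF : Differentiable ℂ F) (a b : ℂ) :
    taylorAtZero₂ (fun p => F (a * p.1, b * p.2)) = rescale₂ a b (taylorAtZero₂ F) := by
  ext k l
  have hpartial : partialTaylorCoeff (fun p => F (a * p.1, b * p.2)) k =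
      fun w => a ^ k * partialTaylorCoeff F k (b * w) :=
    funext fun w => by
      rw [partialTaylorCoeff, taylorAtZero_comp_const_mul (g := fun z => F (z, b * w))
        (by fun_prop), coeff_rescale]
      rfl
  rw [coeff_coeff_rescale₂, coeff_taylorAtZero₂, coeff_taylorAtZero₂, hpartial,
    taylorAtZero_const_mul (g := fun w => partialTaylorCoeff F k (b * w))
      ((differentiable_partialTaylorCoeff hF k).comp (differentiable_id.const_mul b)),
    taylorAtZero_comp_const_mul (differentiable_partialTaylorCoeff hF k), coeff_C_mul,
    coeff_rescale, mul_assoc]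

end TaylorAtZero₂

/-- Under the non-resonance condition, if `P`, `Q` are entire on `ℂ²`,
`Q` is not identically zero, and `P(a₁z₁,a₂z₂)·Q(z₁,z₂) = P(z₁,z₂)·Q(a₁z₁,a₂z₂)`,
then `P = λ·Q` for some constant `λ ∈ ℂ`. -/
theorem stmt_4 (a₁ a₂ : ℂ)
    (h₁ : 0 < ‖a₁‖) (h₁₂ : ‖a₁‖ ≤ ‖a₂‖)
    (h₂ : ‖a₂‖ < 1)
    (hres : ∀ k l : ℕ, (k, l) ≠ (0, 0) → a₁ ^ k ≠ a₂ ^ l)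
    (P Q : ℂ × ℂ → ℂ)
    (hPdiff : Differentiable ℂ P) (hQdiff : Differentiable ℂ Q)
    (hQne : ∃ z : ℂ × ℂ, Q z ≠ 0)
    (heq : ∀ z : ℂ × ℂ, P (a₁ * z.1, a₂ * z.2) * Q z = P z * Q (a₁ * z.1, a₂ * z.2)) :
    ∃ lam : ℂ, ∀ z : ℂ × ℂ, P z = lam * Q z := by
  have hinj := injective_pow_mul_pow (norm_pos_iff.mp h₁) (norm_pos_iff.mp (h₁.trans_le h₁₂))
    (h₁₂.trans_lt h₂) h₂ hres
  have hQ : taylorAtZero₂ Q ≠ 0 := fun hQ0 => by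
    obtain ⟨z, hz⟩ := hQne
    exact hz <| congrFun (eq_of_taylorAtZero₂_eq hQdiff (differentiable_const 0)
      (hQ0.trans taylorAtZero₂_zero.symm)) z
  have htwist : rescale₂ a₁ a₂ (taylorAtZero₂ P) * taylorAtZero₂ Q =
      taylorAtZero₂ P * rescale₂ a₁ a₂ (taylorAtZero₂ Q) := by
    rw [← taylorAtZero₂_comp_mul hPdiff, ← taylorAtZero₂_comp_mul hQdiff,
      ← taylorAtZero₂_mul (by fun_prop) hQdiff, ← taylorAtZero₂_mul hPdiff (by fun_prop),
      funext heq]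
  obtain ⟨lam, hlam⟩ := exists_eq_C_C_mul_of_rescale₂_mul_eq hinj hQ htwist
  refine ⟨lam, congrFun (eq_of_taylorAtZero₂_eq hPdiff (hQdiff.const_mul lam) ?_)⟩
  rw [taylorAtZero₂_const_mul hQdiff, hlam]
end

section
/- Let a₁, a₂ be complex numbers with 0 < |a₁| ≤ |a₂| < 1. Let f : ℂ × ℂ → ℂ be holomorphic on ℂ² ∖ {(0,0)} (complex differentiable at every point of the complement of the origin) and suppose f(a₁ z₁, a₂ z₂) = f(z₁, z₂) for all (z₁, z₂) ≠ (0,0). Then f is constant on ℂ² ∖ {(0,0)}: f(z) = f(w) for all z, w ∈ ℂ² ∖ {(0,0)}. -/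
/-!
With `T z = (a₁ z₁, a₂ z₂)` one has `‖a₁‖ ‖z‖ ≤ ‖T z‖ ≤ ‖a₂‖ ‖z‖` for the sup norm, so the forward
or the backward `T`-orbit of every nonzero point meets the compact annulus `‖a₁‖ ≤ ‖z‖ ≤ 1`.
A `T`-invariant `f` therefore takes on `ℂ² ∖ {0}` only values it takes on that annulus, and is
bounded. Restricted to a complex line avoiding the origin, `f` is then a bounded entire function,
constant by Liouville; any two nonzero points are joined by at most two such lines.
-/

open Function Metric Bornology Set

theorem exists_mem_Ioc_of_ratio_bounds {s : ℕ → ℝ} {r c : ℝ} (hr : 0 < r) (hc : c < 1)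
    (hs : ∀ n, r * s n ≤ s (n + 1) ∧ s (n + 1) ≤ c * s n) (h0 : 1 < s 0) :
    ∃ n, s n ∈ Ioc r 1 := by
  have hpos : ∀ n, 0 < s n := by
    intro n
    induction n with
    | zero => linarith
    | succ n ih => exact (mul_pos hr ih).trans_le (hs n).1
  have hc₀ : 0 ≤ c := by
    have := (hs 0).1.trans (hs 0).2
    nlinarith [hpos 0]
  have hdecay : ∀ n, s n ≤ c ^ n * s 0 := by
    intro n
    induction n with
    | zero => simp
    | succ n ih =>
      calc s (n + 1) ≤ c * s n := (hs n).2
        _ ≤ c * (c ^ n * s 0) := by gcongr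
        _ = c ^ (n + 1) * s 0 := by ring
  have hex : ∃ n, s n ≤ 1 := by
    obtain ⟨n, hn⟩ := exists_pow_lt_of_lt_one (inv_pos.2 (hpos 0)) hc
    refine ⟨n, (hdecay n).trans ?_⟩
    rw [← le_mul_inv_iff₀ (hpos 0), one_mul]
    exact hn.le
  classical
  obtain ⟨m, hm⟩ : ∃ m, Nat.find hex = m + 1 :=
    Nat.exists_eq_succ_of_ne_zero fun h => h0.not_ge (h ▸ Nat.find_spec hex)
  have hm₁ : 1 < s m := not_le.1 (Nat.find_min hex (by omega))
  refine ⟨m + 1, ?_, hm ▸ Nat.find_spec hex⟩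
  nlinarith [(hs m).1]

section Orbit

variable {E : Type*} [NormedAddCommGroup E] {T : E → E} {r c : ℝ}

theorem exists_iterate_norm_mem_Ioc (hr : 0 < r) (hc : c < 1)
    (hT : ∀ x, r * ‖x‖ ≤ ‖T x‖ ∧ ‖T x‖ ≤ c * ‖x‖) {x : E} (hx : 1 < ‖x‖) :
    ∃ n, ‖T^[n] x‖ ∈ Ioc r 1 :=
  exists_mem_Ioc_of_ratio_bounds hr hc
    (fun n => by simpa only [iterate_succ_apply'] using hT (T^[n] x)) hx

theorem exists_iterate_eq_norm_mem_Ico (hr : 0 < r) (hc : c < 1)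
    (hT : ∀ x, r * ‖x‖ ≤ ‖T x‖ ∧ ‖T x‖ ≤ c * ‖x‖) (hsurj : Surjective T) {x : E}
    (hx₀ : x ≠ 0) (hx : ‖x‖ < r) :
    ∃ n y, T^[n] y = x ∧ ‖y‖ ∈ Ico r 1 := by
  set S := surjInv hsurj
  have hTS : ∀ n, T (S^[n + 1] x) = S^[n] x := fun n => by
    rw [iterate_succ_apply']; exact surjInv_eq hsurj _
  have hpos : ∀ n, 0 < ‖S^[n] x‖ := by
    intro n
    induction n with
    | zero => exact norm_pos_iff.2 hx₀
    | succ n ih =>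
      refine (norm_nonneg _).lt_of_ne fun h => ?_
      have := (hT (S^[n + 1] x)).2
      rw [hTS, ← h, mul_zero] at this
      exact ih.not_ge this
  -- the backward orbit, read through `y ↦ r / ‖y‖`, satisfies the same ratio bounds
  obtain ⟨n, hn₁, hn₂⟩ := exists_mem_Ioc_of_ratio_bounds (s := fun n => r / ‖S^[n] x‖) hr hc
    (fun n => by
      obtain ⟨h₁, h₂⟩ := hT (S^[n + 1] x)
      rw [hTS] at h₁ h₂
      have := hpos n; have := hpos (n + 1)
      constructor
      · rw [mul_div_assoc', div_le_div_iff₀ (by positivity) (by positivity)]; nlinarith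
      · rw [mul_div_assoc', div_le_div_iff₀ (by positivity) (by positivity)]; nlinarith)
    (by rw [lt_div_iff₀ (hpos 0)]; simpa using hx)
  have := hpos n
  refine ⟨n, S^[n] x, (rightInverse_surjInv hsurj).iterate n x, ?_, ?_⟩
  · rwa [div_le_one this] at hn₂
  · rwa [lt_div_iff₀ this, mul_lt_iff_lt_one_right hr] at hn₁

theorem exists_mem_annulus_apply_eq {α : Type*} {g : E → α} (hr : 0 < r) (hc : c < 1)
    (hT : ∀ x, r * ‖x‖ ≤ ‖T x‖ ∧ ‖T x‖ ≤ c * ‖x‖) (hsurj : Surjective T) (hg : g ∘ T = g)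
    {x : E} (hx : x ≠ 0) : ∃ u ∈ closedBall 0 1 \ ball 0 r, g u = g x := by
  simp only [mem_sdiff, mem_closedBall_zero_iff, mem_ball_zero_iff, not_lt]
  rcases lt_or_ge 1 ‖x‖ with hx₁ | hx₁
  · obtain ⟨n, hn₁, hn₂⟩ := exists_iterate_norm_mem_Ioc hr hc hT hx₁
    exact ⟨T^[n] x, ⟨hn₂, hn₁.le⟩, congrFun (iterate_invariant hg n) x⟩
  rcases lt_or_ge ‖x‖ r with hxr | hxr
  · obtain ⟨n, y, rfl, hy₁, hy₂⟩ := exists_iterate_eq_norm_mem_Ico hr hc hT hsurj hx hxr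
    exact ⟨y, ⟨hy₂.le, hy₁⟩, (congrFun (iterate_invariant hg n) y).symm⟩
  · exact ⟨x, ⟨hx₁, hxr⟩, rfl⟩

theorem isBounded_image_ne_zero_of_comp_eq [ProperSpace E] {F : Type*} [SeminormedAddGroup F]
    {g : E → F} (hr : 0 < r) (hc : c < 1) (hT : ∀ x, r * ‖x‖ ≤ ‖T x‖ ∧ ‖T x‖ ≤ c * ‖x‖)
    (hsurj : Surjective T) (hg : g ∘ T = g) (hcont : ContinuousOn g {x | x ≠ 0}) :
    IsBounded (g '' {x | x ≠ 0}) := by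
  have hK : closedBall (0 : E) 1 \ ball 0 r ⊆ {x | x ≠ 0} := fun u hu h =>
    hu.2 (h ▸ mem_ball_self hr)
  refine (((isCompact_closedBall 0 1).diff isOpen_ball).image_of_continuousOn
    (hcont.mono hK)).isBounded.subset ?_
  rintro _ ⟨x, hx, rfl⟩
  obtain ⟨u, hu, hgu⟩ := exists_mem_annulus_apply_eq hr hc hT hsurj hg hx
  exact ⟨u, hu, hgu⟩

end Orbit

theorem DifferentiableOn.apply_eq_apply_of_isBounded_of_line_mem {E F : Type*}
    [NormedAddCommGroup E] [NormedSpace ℂ E] [NormedAddCommGroup F] [NormedSpace ℂ F]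
    {f : E → F} {s : Set E} (hs : IsOpen s) (hf : DifferentiableOn ℂ f s)
    (hb : IsBounded (f '' s)) {z w : E} (hline : ∀ t : ℂ, z + t • (w - z) ∈ s) :
    f z = f w := by
  have hg : Differentiable ℂ fun t : ℂ => f (z + t • (w - z)) := fun t =>
    (hf.differentiableAt (hs.mem_nhds (hline t))).comp t (by fun_prop)
  simpa using hg.apply_eq_apply_of_bounded
    (hb.subset (range_subset_iff.2 fun t => mem_image_of_mem f (hline t))) 0 1

section Scaling

variable {𝕜 E F : Type*} [NormedField 𝕜] [SeminormedAddCommGroup E] [NormedSpace 𝕜 E]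
  [SeminormedAddCommGroup F] [NormedSpace 𝕜 F] {a₁ a₂ : 𝕜}

theorem norm_prodMap_smul_bounds (h : ‖a₁‖ ≤ ‖a₂‖) (z : E × F) :
    ‖a₁‖ * ‖z‖ ≤ ‖Prod.map (a₁ • ·) (a₂ • ·) z‖ ∧ ‖Prod.map (a₁ • ·) (a₂ • ·) z‖ ≤ ‖a₂‖ * ‖z‖ := by
  simp only [Prod.norm_def, Prod.map_fst, Prod.map_snd, norm_smul]
  rw [mul_max_of_nonneg _ _ (norm_nonneg a₁), mul_max_of_nonneg _ _ (norm_nonneg a₂)]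
  constructor
  · exact max_le_max le_rfl (by gcongr)
  · exact max_le_max (by gcongr) le_rfl

theorem prodMap_smul_surjective (ha₁ : a₁ ≠ 0) (ha₂ : a₂ ≠ 0) :
    Surjective (Prod.map (a₁ • · : E → E) (a₂ • · : F → F)) :=
  (MulAction.surjective (Units.mk0 a₁ ha₁)).prodMap (MulAction.surjective (Units.mk0 a₂ ha₂))

end Scaling

section Det

variable {K : Type*} [CommRing K]

def det2 (z w : K × K) : K := z.1 * w.2 - z.2 * w.1

theorem add_smul_sub_ne_zero_of_det2_ne_zero {z w : K × K} (h : det2 z w ≠ 0) (t : K) :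
    z + t • (w - z) ≠ 0 := by
  intro h0
  obtain ⟨h₁, h₂⟩ := Prod.ext_iff.1 h0
  simp only [Prod.fst_add, Prod.snd_add, Prod.smul_fst, Prod.smul_snd, Prod.fst_sub,
    Prod.snd_sub, smul_eq_mul, Prod.fst_zero, Prod.snd_zero] at h₁ h₂
  exact h (by unfold det2; linear_combination (w.2 - z.2) * h₁ - (w.1 - z.1) * h₂)

theorem exists_det2_ne_zero {z : K × K} (hz : z ≠ 0) : ∃ u, det2 z u ≠ 0 := by
  by_cases h₁ : z.1 = 0
  · refine ⟨(1, 0), ?_⟩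
    have h₂ : z.2 ≠ 0 := fun h₂ => hz (Prod.ext h₁ h₂)
    simpa [det2] using h₂
  · exact ⟨(0, 1), by simpa [det2] using h₁⟩

theorem eq_zero_of_det2_eq_zero [NoZeroDivisors K] {z w u : K × K} (hzu : det2 z u ≠ 0) (hzw : det2 z w = 0)
    (hwu : det2 w u = 0) : w = 0 := by
  unfold det2 at hzu hzw hwu
  -- `det2 z u • w = det2 w u • z + det2 z w • u`
  refine Prod.ext ?_ ?_
  · exact (mul_eq_zero.1 (by linear_combination z.1 * hwu + u.1 * hzw :
      (z.1 * u.2 - z.2 * u.1) * w.1 = 0)).resolve_left hzu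
  · exact (mul_eq_zero.1 (by linear_combination z.2 * hwu + u.2 * hzw :
      (z.1 * u.2 - z.2 * u.1) * w.2 = 0)).resolve_left hzu

theorem eq_of_forall_det2_ne_zero [NoZeroDivisors K] {α : Type*} {g : K × K → α}
    (hg : ∀ z w, det2 z w ≠ 0 → g z = g w) {z w : K × K} (hz : z ≠ 0) (hw : w ≠ 0) :
    g z = g w := by
  by_cases hzw : det2 z w = 0
  · obtain ⟨u, hzu⟩ := exists_det2_ne_zero hz
    have hwu : det2 w u ≠ 0 := fun hwu => hw (eq_zero_of_det2_eq_zero hzu hzw hwu)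
    exact (hg z u hzu).trans (hg w u hwu).symm
  · exact hg z w hzw

end Det

/-- A function holomorphic on `ℂ² ∖ {(0,0)}` which is invariant under
`(z₁,z₂) ↦ (a₁z₁, a₂z₂)` (with `0 < |a₁| ≤ |a₂| < 1`) is constant there. -/
theorem stmt_5 (a₁ a₂ : ℂ)
    (h₁ : 0 < ‖a₁‖) (h₁₂ : ‖a₁‖ ≤ ‖a₂‖)
    (h₂ : ‖a₂‖ < 1)
    (f : ℂ × ℂ → ℂ)
    (hf : DifferentiableOn ℂ f {z : ℂ × ℂ | z ≠ 0})
    (hinv : ∀ z : ℂ × ℂ, z ≠ 0 → f (a₁ * z.1, a₂ * z.2) = f z) :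
    ∀ z w : ℂ × ℂ, z ≠ 0 → w ≠ 0 → f z = f w := by
  intro z w hz hw
  have ha₁ : a₁ ≠ 0 := norm_pos_iff.1 h₁
  have ha₂ : a₂ ≠ 0 := norm_pos_iff.1 (h₁.trans_le h₁₂)
  have hfT : f ∘ Prod.map (a₁ • ·) (a₂ • ·) = f := funext fun z => by
    rcases eq_or_ne z 0 with rfl | hz
    · exact congrArg f (Prod.ext (smul_zero a₁) (smul_zero a₂))
    · exact hinv z hz
  have hb : IsBounded (f '' {z | z ≠ 0}) :=
    isBounded_image_ne_zero_of_comp_eq h₁ h₂ (norm_prodMap_smul_bounds h₁₂)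
      (prodMap_smul_surjective ha₁ ha₂) hfT hf.continuousOn
  exact eq_of_forall_det2_ne_zero (fun z w hzw => hf.apply_eq_apply_of_isBounded_of_line_mem
    isOpen_ne hb (add_smul_sub_ne_zero_of_det2_ne_zero hzw)) hz hw
end

section
/- Let a₁, a₂ be complex numbers with 0 < |a₁| ≤ |a₂| < 1 such that a₁^k ≠ a₂^l for every pair of natural numbers (k, l) ≠ (0, 0). Let f : ℂ × ℂ → ℂ be holomorphic on the open set {(z₁, z₂) ∈ ℂ² : z₁ ≠ 0} and suppose f(a₁ z₁, a₂ z₂) = f(z₁, z₂) for all (z₁, z₂) with z₁ ≠ 0. Then f is constant on {z₁ ≠ 0}: f(z) = f(w) for all z, w in this set. -/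
/-!
Expand `v ↦ f (u, v)` in its Taylor series at `0`. The `l`-th coefficient `c_l` is holomorphic
on `ℂ \ {0}` (Cauchy's formula with a holomorphic parameter) and satisfies
`c_l u = a₂ ^ l * c_l (a₁ * u)`. For a holomorphic `ψ` on `ℂ \ {0}` with `ψ u = c * ψ (a * u)`,
the function `u ^ m * ψ u` is bounded near `0` for `m` large (a fundamental annulus argument), so
it extends to an entire function whose Taylor coefficients `d_n` satisfy
`(c * a ^ (n - m) - 1) * d_n = 0`. Non-resonance gives `a₂ ^ l * a₁ ^ k ≠ 1` for `l ≠ 0` and all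
`k : ℤ`, so `c_l = 0` for `l ≠ 0`; hence `f (u, v) = f (u, 0)`, and `u ↦ f (u, 0)` is
`a₁`-invariant, hence constant by the same argument with `c = 1`.
-/

open Real Complex Metric Set Filter Function Topology MeasureTheory

section ParametricIntegral

variable {E : Type*} [NormedAddCommGroup E] [NormedSpace ℂ E]

theorem differentiableOn_intervalIntegral_param [CompleteSpace E] {F : ℂ → ℝ → E} {U : Set ℂ}
    (hU : IsOpen U) (hF : ContinuousOn (uncurry F) (U ×ˢ univ))
    (hF' : ∀ t, DifferentiableOn ℂ (F · t) U) (a b : ℝ) :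
    DifferentiableOn ℂ (fun u => ∫ t in a..b, F u t) U := by
  intro u₀ hu₀
  obtain ⟨ε, hε, hεU⟩ := nhds_basis_closedBall.mem_iff.1 (hU.mem_nhds hu₀)
  set r := ε / 2 with hr_def
  have hr : 0 < r := half_pos hε
  have hball : ∀ x ∈ ball u₀ r, closedBall x r ⊆ closedBall u₀ ε := fun x hx =>
    closedBall_subset_closedBall' (by rw [mem_ball] at hx; linarith [hr_def])
  have hcont : ∀ x ∈ U, Continuous (F x) := fun x hx =>
    hF.comp_continuous (continuous_const.prodMk continuous_id) fun _ => ⟨hx, trivial⟩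
  obtain ⟨M, hM⟩ := ((isCompact_closedBall u₀ ε).prod (isCompact_uIcc (a := a) (b := b))
    ).exists_bound_of_continuousOn (hF.mono (prod_mono hεU (subset_univ _)))
  -- Cauchy's formula for the derivative gives both the domination and the measurability in `t`.
  have hcderiv : ∀ t, ∀ x ∈ ball u₀ r, cderiv r (F · t) x = deriv (F · t) x :=
    fun t x hx => cderiv_eq_deriv hU (hF' t) hr ((hball x hx).trans hεU)
  have hmeas : Continuous fun t => cderiv r (F · t) u₀ := by
    refine continuous_const.smul
      (intervalIntegral.continuous_parametric_intervalIntegral_of_continuous' ?_ _ _)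
    refine (((contDiff_circleMap u₀ r).continuous_deriv le_rfl).comp continuous_snd).smul
      (((((continuous_circleMap u₀ r).sub continuous_const).pow 2).inv₀ fun θ =>
        pow_ne_zero 2 (sub_ne_zero.2 (circleMap_ne_center hr.ne'))).comp continuous_snd |>.smul ?_)
    exact hF.comp_continuous ((continuous_circleMap u₀ r).comp continuous_snd |>.prodMk
      continuous_fst) fun p =>
        ⟨hεU (hball u₀ (mem_ball_self hr) (sphere_subset_closedBall
          (circleMap_mem_sphere u₀ hr.le p.2))), trivial⟩
  have key := intervalIntegral.hasDerivAt_integral_of_dominated_loc_of_deriv_le (μ := volume)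
    (a := a) (b := b) (F' := fun x t => deriv (F · t) x) (bound := fun _ => M / r)
    (ball_mem_nhds u₀ hr)
    (Eventually.mono (hU.mem_nhds hu₀) fun x hx => (hcont x hx).aestronglyMeasurable)
    ((hcont u₀ hu₀).intervalIntegrable _ _)
    ((hmeas.congr fun t => hcderiv t u₀ (mem_ball_self hr)).aestronglyMeasurable)
    (ae_of_all _ fun t ht x hx => hcderiv t x hx ▸ norm_cderiv_le hr fun w hw =>
      hM (w, t) ⟨hball x hx (sphere_subset_closedBall hw), uIoc_subset_uIcc ht⟩)
    intervalIntegrable_const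
    (ae_of_all _ fun t _ x hx => ((hF' t).differentiableAt (hU.mem_nhds
      (hεU (hball x hx (mem_closedBall_self hr.le))))).hasDerivAt)
  exact key.2.differentiableAt.differentiableWithinAt

theorem differentiableOn_circleIntegral_param [CompleteSpace E] {f : ℂ → ℂ → E} {U : Set ℂ}
    (hU : IsOpen U) {c : ℂ} {R : ℝ} (hf : ContinuousOn (uncurry f) (U ×ˢ sphere c |R|))
    (hf' : ∀ z ∈ sphere c |R|, DifferentiableOn ℂ (f · z) U) :
    DifferentiableOn ℂ (fun u => ∮ z in C(c, R), f u z) U := by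
  refine differentiableOn_intervalIntegral_param hU ?_ (fun θ => ?_) _ _
  · refine (((contDiff_circleMap c R).continuous_deriv le_rfl).comp continuous_snd
      ).continuousOn.smul ?_
    exact hf.comp (continuous_fst.prodMk ((continuous_circleMap c R).comp continuous_snd)
      ).continuousOn fun p (hp : p ∈ U ×ˢ univ) => ⟨hp.1, circleMap_mem_sphere' c R p.2⟩
  · exact (hf' _ (circleMap_mem_sphere' c R θ)).const_smul _

theorem differentiable_slice {f : ℂ × ℂ → E} {U : Set ℂ} (hU : IsOpen U)
    (hf : DifferentiableOn ℂ f (U ×ˢ univ)) {u : ℂ} (hu : u ∈ U) :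
    Differentiable ℂ (fun v => f (u, v)) := fun v =>
  (hf.differentiableAt ((hU.prod isOpen_univ).mem_nhds ⟨hu, trivial⟩)).comp v
    ((differentiableAt_const u).prodMk differentiableAt_id)

theorem differentiableOn_iteratedDeriv_slice [CompleteSpace E] {f : ℂ × ℂ → E} {U : Set ℂ}
    (hU : IsOpen U) (hf : DifferentiableOn ℂ f (U ×ˢ univ)) (l : ℕ) (v₀ : ℂ) :
    DifferentiableOn ℂ (fun u => iteratedDeriv l (fun v => f (u, v)) v₀) U := by
  have hcauchy : ∀ u ∈ U, iteratedDeriv l (fun v => f (u, v)) v₀ =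
      (2 * π * I / l.factorial)⁻¹ • ∮ z in C(v₀, 1), (1 / (z - v₀) ^ (l + 1)) • f (u, z) :=
    fun u hu => by
      rw [circleIntegral_one_div_sub_center_pow_smul_of_differentiable_on_off_countable one_pos l
        countable_empty (differentiable_slice hU hf hu).continuous.continuousOn
        fun z _ => differentiable_slice hU hf hu z, inv_smul_smul₀]
      exact div_ne_zero two_pi_I_ne_zero (Nat.cast_ne_zero.2 l.factorial_ne_zero)
  refine DifferentiableOn.congr (DifferentiableOn.const_smul ?_ _) hcauchy
  refine differentiableOn_circleIntegral_param hU ?_ fun z _ => ?_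
  · refine ContinuousOn.smul (continuousOn_const.div ((continuous_snd.sub continuous_const).pow _
      ).continuousOn fun p hp =>
        pow_ne_zero _ (sub_ne_zero.2 (ne_of_mem_sphere hp.2 (by norm_num))))
      (hf.continuousOn.mono fun p hp => ⟨hp.1, trivial⟩)
  · exact (hf.comp (differentiableOn_id.prodMk (differentiableOn_const z))
      fun u hu => ⟨hu, trivial⟩).const_smul _

end ParametricIntegral

section BoundedNearZero

variable {E : Type*} [NormedAddCommGroup E]

theorem exists_bound_of_norm_comp_mul_le {ψ : ℂ → E} {a : ℂ} (ha₀ : a ≠ 0) (ha : ‖a‖ < 1)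
    (hψ : ContinuousOn ψ {0}ᶜ) (hle : ∀ u ≠ 0, ‖ψ (a * u)‖ ≤ ‖ψ u‖) :
    ∃ M, ∀ z ≠ 0, ‖z‖ ≤ 1 → ‖ψ z‖ ≤ M := by
  have hpos : 0 < ‖a‖ := norm_pos_iff.2 ha₀
  obtain ⟨M, hM⟩ := ((isCompact_closedBall (0 : ℂ) 1).diff (isOpen_ball (x := 0) (ε := ‖a‖))
    ).exists_bound_of_continuousOn (hψ.mono fun z hz (h0 : z = 0) => hz.2 (by simp [h0, hpos]))
  have hannulus : ∀ z : ℂ, ‖a‖ ≤ ‖z‖ → ‖z‖ ≤ 1 → ‖ψ z‖ ≤ M := fun z h₁ h₂ =>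
    hM z ⟨by simpa using h₂, by simpa using h₁⟩
  -- Every point of the punctured disc is moved into the annulus by some power of `u ↦ u / a`.
  have hpow : ∀ n : ℕ, ∀ z : ℂ, ‖a‖ ^ n ≤ ‖z‖ → ‖z‖ ≤ 1 → ‖ψ z‖ ≤ M := by
    intro n
    induction n with
    | zero => intro z h₁ h₂; exact hannulus z (ha.le.trans (by simpa using h₁)) h₂
    | succ n ih =>
      intro z h₁ h₂
      rcases le_or_gt ‖a‖ ‖z‖ with hz | hz
      · exact hannulus z hz h₂
      have hz' : ‖z / a‖ = ‖z‖ / ‖a‖ := norm_div z a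
      calc ‖ψ z‖ = ‖ψ (a * (z / a))‖ := by rw [mul_div_cancel₀ z ha₀]
        _ ≤ ‖ψ (z / a)‖ :=
            hle _ (div_ne_zero (norm_pos_iff.1 ((pow_pos hpos _).trans_le h₁)) ha₀)
        _ ≤ M := ih _ (by rw [hz', le_div_iff₀ hpos, ← pow_succ]; exact h₁)
            (by rw [hz', div_le_one hpos]; exact hz.le)
  refine ⟨M, fun z hz hz₁ => ?_⟩
  obtain ⟨n, hn⟩ := exists_pow_lt_of_lt_one (norm_pos_iff.2 hz) ha
  exact hpow n z hn.le hz₁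

theorem exists_differentiable_eq_of_norm_le [NormedSpace ℂ E] [CompleteSpace E] {ψ : ℂ → E}
    {M : ℝ} (hψ : DifferentiableOn ℂ ψ {0}ᶜ) (hM : ∀ z ≠ 0, ‖z‖ ≤ 1 → ‖ψ z‖ ≤ M) :
    ∃ X : ℂ → E, Differentiable ℂ X ∧ ∀ z ≠ 0, X z = ψ z := by
  set X := update ψ 0 (limUnder (𝓝[≠] (0 : ℂ)) ψ)
  have hX : ∀ z ≠ 0, X z = ψ z := fun z hz => update_of_ne hz _ _
  have hball : DifferentiableOn ℂ X (ball 0 1) :=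
    differentiableOn_update_limUnder_of_bddAbove (ball_mem_nhds 0 one_pos)
      (hψ.mono fun z hz => hz.2) ⟨M, by
        rintro - ⟨z, ⟨hz₁, hz₀⟩, rfl⟩
        exact hM z hz₀ (by simpa using (mem_ball_zero_iff.1 hz₁).le)⟩
  refine ⟨X, fun z => ?_, hX⟩
  rcases eq_or_ne z 0 with rfl | hz
  · exact hball.differentiableAt (ball_mem_nhds 0 one_pos)
  · exact (hψ.differentiableAt (isOpen_compl_singleton.mem_nhds hz)).congr_of_eventuallyEq
      ((eventually_ne_nhds hz).mono hX)

end BoundedNearZero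

theorem exists_differentiable_eq_of_comp_mul_eq {ψ : ℂ → ℂ} {a b : ℂ} (ha₀ : a ≠ 0)
    (ha : ‖a‖ < 1) (hb : ‖b‖ ≤ 1) (hψ : DifferentiableOn ℂ ψ {0}ᶜ)
    (h : ∀ u ≠ 0, ψ (a * u) = b * ψ u) :
    ∃ X : ℂ → ℂ, Differentiable ℂ X ∧ (∀ u ≠ 0, X u = ψ u) ∧ ∀ z, X (a * z) = b * X z := by
  obtain ⟨M, hM⟩ := exists_bound_of_norm_comp_mul_le ha₀ ha hψ.continuousOn fun u hu => by
    rw [h u hu, norm_mul]; exact mul_le_of_le_one_left (norm_nonneg _) hb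
  obtain ⟨X, hX, hXψ⟩ := exists_differentiable_eq_of_norm_le hψ hM
  refine ⟨X, hX, hXψ, congrFun ?_⟩
  refine (hX.continuous.comp (continuous_const_mul a)).ext_on (dense_compl_singleton 0)
    (continuous_const.mul hX.continuous) fun z (hz : z ≠ 0) => ?_
  simp only [comp_apply]
  rw [hXψ _ (mul_ne_zero ha₀ hz), hXψ z hz, h z hz]

theorem iteratedDeriv_eq_zero_of_comp_mul_eq {X : ℂ → ℂ} (hX : Differentiable ℂ X) {a b : ℂ}
    (h : ∀ z, X (a * z) = b * X z) {n : ℕ} (hn : a ^ n ≠ b) : iteratedDeriv n X 0 = 0 := by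
  have hcomp := congrFun (iteratedDeriv_comp_const_mul (n := n) hX.contDiff a) 0
  simp only [h, iteratedDeriv_const_mul_field, mul_zero] at hcomp
  have : (a ^ n - b) * iteratedDeriv n X 0 = 0 := by linear_combination -hcomp
  exact (mul_eq_zero.1 this).resolve_left (sub_ne_zero.2 hn)

theorem eq_apply_zero_of_iteratedDeriv_eq_zero {X : ℂ → ℂ} (hX : Differentiable ℂ X)
    (h : ∀ n ≠ 0, iteratedDeriv n X 0 = 0) (z : ℂ) : X z = X 0 := by
  rw [← taylorSeries_eq_of_entire' 0 z hX, tsum_eq_single 0 fun n hn => by simp [h n hn]]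
  simp

theorem pow_ne_one_of_norm_lt_one {a : ℂ} (ha : ‖a‖ < 1) {n : ℕ} (hn : n ≠ 0) : a ^ n ≠ 1 :=
  fun h => (pow_lt_one₀ (norm_nonneg a) ha hn).ne (by simpa using congrArg norm h)

theorem eq_of_comp_mul_eq {ψ : ℂ → ℂ} {a : ℂ} (ha₀ : a ≠ 0) (ha : ‖a‖ < 1)
    (hψ : DifferentiableOn ℂ ψ {0}ᶜ) (h : ∀ u ≠ 0, ψ (a * u) = ψ u) {u v : ℂ} (hu : u ≠ 0)
    (hv : v ≠ 0) : ψ u = ψ v := by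
  obtain ⟨X, hX, hXψ, hXa⟩ := exists_differentiable_eq_of_comp_mul_eq ha₀ ha norm_one.le hψ
    (b := 1) fun u hu => by rw [one_mul, h u hu]
  have hconst := eq_apply_zero_of_iteratedDeriv_eq_zero hX fun n hn =>
    iteratedDeriv_eq_zero_of_comp_mul_eq hX hXa (pow_ne_one_of_norm_lt_one ha hn)
  rw [← hXψ u hu, ← hXψ v hv, hconst u, hconst v]

theorem eq_zero_of_eq_mul_comp_mul {ψ : ℂ → ℂ} {a c : ℂ} (ha₀ : a ≠ 0) (ha : ‖a‖ < 1)
    (hc : ∀ k : ℤ, c * a ^ k ≠ 1) (hψ : DifferentiableOn ℂ ψ {0}ᶜ)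
    (h : ∀ u ≠ 0, ψ u = c * ψ (a * u)) {u : ℂ} (hu : u ≠ 0) : ψ u = 0 := by
  rcases eq_or_ne c 0 with rfl | hc₀
  · simpa using h u hu
  -- `u ↦ u ^ m * ψ u` stays bounded near `0` once `‖a‖ ^ m ≤ ‖c‖`.
  obtain ⟨m, hm⟩ := exists_pow_lt_of_lt_one (norm_pos_iff.2 hc₀) ha
  have hb : ‖a ^ m / c‖ ≤ 1 := by
    rw [norm_div, norm_pow]; exact div_le_one_of_le₀ hm.le (norm_nonneg _)
  obtain ⟨X, hX, hXχ, hXa⟩ :=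
    exists_differentiable_eq_of_comp_mul_eq (ψ := fun z => z ^ m * ψ z) ha₀ ha hb
      ((differentiable_pow m).differentiableOn.mul hψ) fun u hu => by
        simp only [h u hu]; field_simp; ring
  have hderiv : ∀ n, iteratedDeriv n X 0 = 0 := fun n =>
    iteratedDeriv_eq_zero_of_comp_mul_eq hX hXa fun hn => hc (n - m) (by
      rw [zpow_sub₀ ha₀, zpow_natCast, zpow_natCast, hn]; field_simp)
  have hχ : u ^ m * ψ u = 0 := by
    rw [← hXχ u hu, eq_apply_zero_of_iteratedDeriv_eq_zero hX (fun n _ => hderiv n) u,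
      ← iteratedDeriv_zero (f := X), hderiv 0]
  simpa [hu] using hχ

theorem mul_zpow_ne_one_of_nonresonant {a₁ a₂ : ℂ} (ha₁ : ‖a₁‖ < 1) (ha₂ : ‖a₂‖ < 1)
    (hres : ∀ k l : ℕ, (k, l) ≠ (0, 0) → a₁ ^ k ≠ a₂ ^ l) {l : ℕ} (hl : l ≠ 0) (k : ℤ) :
    a₂ ^ l * a₁ ^ k ≠ 1 := by
  intro h
  obtain ⟨n, rfl | rfl⟩ := Int.eq_nat_or_neg k
  · have hnorm := congrArg norm h
    rw [zpow_natCast, norm_mul, norm_pow, norm_pow, norm_one] at hnorm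
    exact (mul_lt_one_of_nonneg_of_lt_one_left (by positivity)
      (pow_lt_one₀ (norm_nonneg _) ha₂ hl) (pow_le_one₀ (norm_nonneg _) ha₁.le)).ne hnorm
  · rw [zpow_neg, zpow_natCast] at h
    have hne : a₁ ^ n ≠ 0 := fun h0 => by simp [h0] at h
    exact hres n l (by simp [hl]) ((mul_inv_eq_one₀ hne).1 h).symm

/-- Under the non-resonance condition, a function holomorphic on
`{z₁ ≠ 0} ⊂ ℂ²` and invariant under `(z₁,z₂) ↦ (a₁z₁, a₂z₂)` is constant there. -/
theorem stmt_6 (a₁ a₂ : ℂ)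
    (h₁ : 0 < ‖a₁‖) (h₁₂ : ‖a₁‖ ≤ ‖a₂‖)
    (h₂ : ‖a₂‖ < 1)
    (hres : ∀ k l : ℕ, (k, l) ≠ (0, 0) → a₁ ^ k ≠ a₂ ^ l)
    (f : ℂ × ℂ → ℂ)
    (hf : DifferentiableOn ℂ f {z : ℂ × ℂ | z.1 ≠ 0})
    (hinv : ∀ z : ℂ × ℂ, z.1 ≠ 0 → f (a₁ * z.1, a₂ * z.2) = f z) :
    ∀ z w : ℂ × ℂ, z.1 ≠ 0 → w.1 ≠ 0 → f z = f w := by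
  intro z w hz hw
  have ha₁ : a₁ ≠ 0 := norm_pos_iff.1 h₁
  have ha₁_lt : ‖a₁‖ < 1 := h₁₂.trans_lt h₂
  have hf' : DifferentiableOn ℂ f ({0}ᶜ ×ˢ univ) := hf.mono fun z hz => hz.1
  have hinv' : ∀ u ≠ 0, ∀ v, f (a₁ * u, a₂ * v) = f (u, v) := fun u hu v => hinv (u, v) hu
  have hslice : ∀ u ≠ 0, Differentiable ℂ (fun v => f (u, v)) := fun u hu =>
    differentiable_slice isOpen_compl_singleton hf' hu
  have hcoeff : ∀ l ≠ 0, ∀ u ≠ 0, iteratedDeriv l (fun v => f (u, v)) 0 = 0 := by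
    intro l hl u hu
    refine eq_zero_of_eq_mul_comp_mul ha₁ ha₁_lt
      (mul_zpow_ne_one_of_nonresonant ha₁_lt h₂ hres hl)
      (differentiableOn_iteratedDeriv_slice isOpen_compl_singleton hf' l 0) (fun u hu => ?_) hu
    have h := congrFun (iteratedDeriv_comp_const_mul (n := l)
      (hslice _ (mul_ne_zero ha₁ hu)).contDiff a₂) 0
    simpa only [hinv' u hu, mul_zero] using h
  have hv : ∀ u ≠ 0, ∀ v, f (u, v) = f (u, 0) := fun u hu =>
    eq_apply_zero_of_iteratedDeriv_eq_zero (hslice u hu) fun l hl => hcoeff l hl u hu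
  have hu : f (z.1, 0) = f (w.1, 0) := eq_of_comp_mul_eq (ψ := fun u => f (u, 0)) ha₁ ha₁_lt
    (hf.comp (differentiableOn_id.prodMk (differentiableOn_const 0)) fun u hu => hu)
    (fun u hu => by simpa using hinv' u hu 0) hz hw
  calc f z = f (z.1, 0) := hv z.1 hz z.2
    _ = f (w.1, 0) := hu
    _ = f w := (hv w.1 hw w.2).symm
end

section
/- Let a₁, a₂ be complex numbers with 0 < |a₁| ≤ |a₂| < 1 such that a₁^k ≠ a₂^l for every pair of natural numbers (k, l) ≠ (0, 0). Let f : ℂ × ℂ → ℂ be holomorphic on the open set {(z₁, z₂) ∈ ℂ² : z₁ ≠ 0 and z₂ ≠ 0} and suppose f(a₁ z₁, a₂ z₂) = f(z₁, z₂) for all (z₁, z₂) with z₁ ≠ 0 and z₂ ≠ 0. Then f is constant on {z₁ ≠ 0, z₂ ≠ 0}: f(z) = f(w) for all z, w in this set. -/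
/-!
Write `c k m r₁ r₂ = ∮ x in C(0, r₁), ∮ t in C(0, r₂), x ^ k * t ^ m * f (x, t)` for the moments
of `f` on the torus of radii `(r₁, r₂)`. By Cauchy's theorem in each variable (and
Fubini) they do not depend on the radii. Substituting `(x, t) ↦ (a₁ x, a₂ t)` and using the
invariance of `f` gives `c k m r₁ r₂ = a₁ ^ (k + 1) * a₂ ^ (m + 1) * c k m r₁ r₂`, so
non-resonance kills every moment except `c (-1) (-1)`. On a circle the moments
`∮ z ^ m * h z` are the Fourier coefficients of `h ∘ circleMap`, and by Parseval a continuous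
function whose Fourier coefficients vanish is zero. Applied first in `x` and then in `t`, this
shows that `f = (2πi)⁻² c (-1) (-1)` on every torus.
-/

open Complex Metric Set Real MeasureTheory

theorem circleIntegral_zpow_mul_eq_fourierCoeffOn (h : ℂ → ℂ) {r : ℝ} (hr : r ≠ 0) (n : ℤ) :
    (∮ z in C(0, r), z ^ (-n - 1) * h z) =
      2 * π * I * (r : ℂ) ^ (-n) * fourierCoeffOn two_pi_pos (fun θ => h (circleMap 0 r θ)) n := by
  have hr' : (r : ℂ) ≠ 0 := ofReal_ne_zero.2 hr
  have hintegrand : ∀ θ : ℝ,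
      deriv (circleMap 0 r) θ • (circleMap 0 r θ ^ (-n - 1) * h (circleMap 0 r θ)) =
        I * (r : ℂ) ^ (-n) * (fourier (-n) (θ : AddCircle (2 * π - 0)) • h (circleMap 0 r θ)) := by
    intro θ
    have hfourier : (fourier (-n) (θ : AddCircle (2 * π - 0)) : ℂ) = exp (θ * I) ^ (-n) := by
      rw [fourier_coe_apply, ← exp_int_mul]
      congr 1
      push_cast
      field_simp
      ring
    rw [deriv_circleMap, hfourier, smul_eq_mul, smul_eq_mul,
      zpow_sub_one₀ (circleMap_ne_center hr), circleMap_zero, mul_zpow]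
    field_simp
  simp only [circleIntegral, hintegrand, intervalIntegral.integral_const_mul,
    fourierCoeffOn_eq_integral, smul_eq_mul, real_smul, sub_zero]
  push_cast
  field_simp

theorem circleMap_eq_zero_of_circleIntegral_zpow_mul_eq_zero {h : ℂ → ℂ} {r : ℝ} (hr : 0 < r)
    (hh : Continuous fun θ => h (circleMap 0 r θ))
    (hmom : ∀ m : ℤ, (∮ z in C(0, r), z ^ m * h z) = 0) (θ : ℝ) :
    h (circleMap 0 r θ) = 0 := by
  have hcoeff : ∀ n : ℤ, fourierCoeffOn two_pi_pos (fun θ => h (circleMap 0 r θ)) n = 0 := by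
    intro n
    have := circleIntegral_zpow_mul_eq_fourierCoeffOn h hr.ne' n
    rw [hmom] at this
    exact (mul_eq_zero.1 this.symm).resolve_left
      (mul_ne_zero two_pi_I_ne_zero (zpow_ne_zero _ (ofReal_ne_zero.2 hr.ne')))
  have hL2 : MemLp (fun θ => h (circleMap 0 r θ)) 2 (volume.restrict (Ioc 0 (2 * π))) :=
    (memLp_two_iff_integrable_sq_norm hh.aestronglyMeasurable).2 (hh.norm.pow 2).integrableOn_Ioc
  have hsq : ∫ θ in 0..2 * π, ‖h (circleMap 0 r θ)‖ ^ 2 = 0 := by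
    have := (hasSum_sq_fourierCoeffOn two_pi_pos hL2).unique
      (by simp only [hcoeff, norm_zero, zero_pow two_ne_zero]; exact hasSum_zero)
    simpa [two_pi_pos.ne'] using this
  obtain ⟨θ₀, hθ₀, hθθ₀⟩ := ((periodic_circleMap 0 r).comp h).exists_mem_Ico₀ two_pi_pos θ
  simp only [Function.comp_apply] at hθθ₀
  by_contra hne
  have : 0 < ∫ θ in 0..2 * π, ‖h (circleMap 0 r θ)‖ ^ 2 :=
    intervalIntegral.integral_pos two_pi_pos (hh.norm.pow 2).continuousOn
      (fun _ _ => by positivity)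
      ⟨θ₀, Ico_subset_Icc_self hθ₀, pow_pos (norm_pos_iff.2 (hθθ₀ ▸ hne)) 2⟩
  linarith

theorem circleMap_eq_of_circleIntegral_zpow_mul_eq_zero {h : ℂ → ℂ} {r : ℝ} (hr : 0 < r)
    (hh : Continuous fun θ => h (circleMap 0 r θ))
    (hmom : ∀ m : ℤ, m ≠ -1 → (∮ z in C(0, r), z ^ m * h z) = 0) (θ : ℝ) :
    h (circleMap 0 r θ) = (2 * π * I)⁻¹ * ∮ z in C(0, r), z ^ (-1 : ℤ) * h z := by
  set c := (2 * π * I)⁻¹ * ∮ z in C(0, r), z ^ (-1 : ℤ) * h z with hc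
  have hzpow : ∀ m : ℤ, Continuous fun θ => circleMap 0 r θ ^ m := fun m =>
    (continuous_circleMap 0 r).zpow₀ m fun _ => Or.inl (circleMap_ne_center hr.ne')
  refine sub_eq_zero.1 (circleMap_eq_zero_of_circleIntegral_zpow_mul_eq_zero (h := fun z => h z - c)
    hr (hh.sub continuous_const) (fun m => ?_) θ)
  simp only [mul_sub]
  have hint : ∀ g : ℂ → ℂ, (Continuous fun θ => g (circleMap 0 r θ)) → CircleIntegrable g 0 r :=
    fun g hg => hg.intervalIntegrable _ _
  rw [circleIntegral.integral_sub (hint _ ((hzpow m).mul hh))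
    (hint _ ((hzpow m).mul continuous_const))]
  have hconst : (∮ z in C(0, r), z ^ m * c) = (∮ z in C(0, r), z ^ m) * c :=
    circleIntegral.integral_smul_const _ c 0 r
  rw [hconst]
  rcases eq_or_ne m (-1) with rfl | hm
  · have h2πI : (∮ z in C(0, r), z ^ (-1 : ℤ)) = 2 * π * I := by
      simpa using circleIntegral.integral_sub_center_inv 0 hr.ne'
    rw [h2πI, hc, mul_inv_cancel_left₀ two_pi_I_ne_zero, sub_self]
  · have hzero : (∮ z in C(0, r), z ^ m) = 0 := by
      simpa using circleIntegral.integral_sub_zpow_of_ne hm 0 0 r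
    rw [hmom m hm, hzero, zero_mul, sub_zero]

theorem circleIntegral_comp_const_mul (g : ℂ → ℂ) {a : ℂ} (ha : a ≠ 0) (r : ℝ) :
    (∮ z in C(0, r), g (a * z)) = a⁻¹ * ∮ z in C(0, ‖a‖ * r), g z := by
  have hrotate : ∀ θ : ℝ, a * circleMap 0 r θ = circleMap 0 (‖a‖ * r) (θ + arg a) := by
    intro θ
    simp only [circleMap_zero]
    conv_lhs => rw [← norm_mul_exp_arg_mul_I a]
    push_cast
    rw [add_mul, Complex.exp_add]
    ring
  set Φ : ℝ → ℂ := fun θ => deriv (circleMap 0 (‖a‖ * r)) θ • g (circleMap 0 (‖a‖ * r) θ)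
  have hΦ : Function.Periodic Φ (2 * π) := fun θ => by
    simp only [Φ, deriv_circleMap, periodic_circleMap _ _ θ]
  calc (∮ z in C(0, r), g (a * z))
      = ∫ θ in 0..2 * π, a⁻¹ * Φ (θ + arg a) := by
        unfold circleIntegral
        congr 1 with θ
        simp only [Φ, deriv_circleMap, smul_eq_mul, ← hrotate]
        field_simp
    _ = a⁻¹ * ∮ z in C(0, ‖a‖ * r), g z := by
        rw [intervalIntegral.integral_const_mul, intervalIntegral.integral_comp_add_right,
          zero_add, add_comm (2 * π), hΦ.intervalIntegral_add_eq (arg a) 0, zero_add]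
        rfl

theorem circleIntegral_eq_of_differentiableOn {g : ℂ → ℂ} (hg : DifferentiableOn ℂ g {0}ᶜ)
    {r R : ℝ} (hr : 0 < r) (hR : 0 < R) : (∮ z in C(0, r), g z) = ∮ z in C(0, R), g z := by
  wlog hrR : r ≤ R generalizing r R
  · exact (this hR hr (le_of_not_ge hrR)).symm
  have hsub : closedBall (0 : ℂ) R \ ball 0 r ⊆ {0}ᶜ := by
    rintro z ⟨-, hz⟩ rfl
    simp [hr] at hz
  refine (circleIntegral_eq_of_differentiable_on_annulus_off_countable hr hrR countable_empty
    (hg.continuousOn.mono hsub) fun z hz => hg.differentiableAt ?_).symm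
  refine isOpen_compl_singleton.mem_nhds ?_
  rintro rfl
  simp [hr.le] at hz

section TwoVariables

variable {F : ℂ × ℂ → ℂ} {r₁ r₂ : ℝ}

theorem continuous_comp_circleMap_prod (hF : ContinuousOn F {z : ℂ × ℂ | z.1 ≠ 0 ∧ z.2 ≠ 0})
    (hr₁ : r₁ ≠ 0) (hr₂ : r₂ ≠ 0) :
    Continuous fun p : ℝ × ℝ => F (circleMap 0 r₁ p.1, circleMap 0 r₂ p.2) :=
  hF.comp_continuous (by fun_prop) fun _ => ⟨circleMap_ne_center hr₁, circleMap_ne_center hr₂⟩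

theorem continuous_circleIntegral_comp_circleMap
    (hF : ContinuousOn F {z : ℂ × ℂ | z.1 ≠ 0 ∧ z.2 ≠ 0}) (hr₁ : r₁ ≠ 0) (hr₂ : r₂ ≠ 0) :
    Continuous fun θ => ∮ t in C(0, r₂), F (circleMap 0 r₁ θ, t) := by
  simp only [circleIntegral, deriv_circleMap]
  exact intervalIntegral.continuous_parametric_intervalIntegral_of_continuous'
    ((by fun_prop : Continuous fun p : ℝ × ℝ => circleMap 0 r₂ p.2 * I).smul
      (continuous_comp_circleMap_prod hF hr₁ hr₂)) _ _

theorem circleIntegral_circleIntegral_swap (hF : ContinuousOn F {z : ℂ × ℂ | z.1 ≠ 0 ∧ z.2 ≠ 0})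
    (hr₁ : r₁ ≠ 0) (hr₂ : r₂ ≠ 0) :
    (∮ x in C(0, r₁), ∮ t in C(0, r₂), F (x, t)) = ∮ t in C(0, r₂), ∮ x in C(0, r₁), F (x, t) := by
  simp only [circleIntegral, ← intervalIntegral.integral_smul]
  rw [intervalIntegral_intervalIntegral_swap]
  · simp only [smul_comm (deriv (circleMap 0 r₁) _)]
  · refine (Continuous.continuousOn ?_).integrableOn_compact (isCompact_uIcc.prod isCompact_uIcc)
      |>.mono_set (prod_mono uIoc_subset_uIcc uIoc_subset_uIcc)
    simp only [deriv_circleMap]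
    exact (by fun_prop : Continuous fun p : ℝ × ℝ => circleMap 0 r₁ p.1 * I).smul
      ((by fun_prop : Continuous fun p : ℝ × ℝ => circleMap 0 r₂ p.2 * I).smul
        (continuous_comp_circleMap_prod hF hr₁ hr₂))

theorem circleIntegral_circleIntegral_eq_of_differentiableOn
    (hF : DifferentiableOn ℂ F {z : ℂ × ℂ | z.1 ≠ 0 ∧ z.2 ≠ 0}) {s₁ s₂ : ℝ}
    (hr₁ : 0 < r₁) (hr₂ : 0 < r₂) (hs₁ : 0 < s₁) (hs₂ : 0 < s₂) :
    (∮ x in C(0, r₁), ∮ t in C(0, r₂), F (x, t)) = ∮ x in C(0, s₁), ∮ t in C(0, s₂), F (x, t) := by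
  have hslice₁ : ∀ t : ℂ, t ≠ 0 → DifferentiableOn ℂ (fun x => F (x, t)) {0}ᶜ := fun t ht =>
    hF.comp (differentiableOn_id.prodMk (differentiableOn_const t)) fun _ hx => ⟨hx, ht⟩
  have hslice₂ : ∀ x : ℂ, x ≠ 0 → DifferentiableOn ℂ (fun t => F (x, t)) {0}ᶜ := fun x hx =>
    hF.comp ((differentiableOn_const x).prodMk differentiableOn_id) fun _ ht => ⟨hx, ht⟩
  calc (∮ x in C(0, r₁), ∮ t in C(0, r₂), F (x, t))
      = ∮ x in C(0, r₁), ∮ t in C(0, s₂), F (x, t) :=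
        circleIntegral.integral_congr hr₁.le fun x hx => circleIntegral_eq_of_differentiableOn
          (hslice₂ x (ne_zero_of_mem_sphere hr₁.ne' ⟨x, hx⟩)) hr₂ hs₂
    _ = ∮ t in C(0, s₂), ∮ x in C(0, r₁), F (x, t) :=
        circleIntegral_circleIntegral_swap hF.continuousOn hr₁.ne' hs₂.ne'
    _ = ∮ t in C(0, s₂), ∮ x in C(0, s₁), F (x, t) :=
        circleIntegral.integral_congr hs₂.le fun t ht => circleIntegral_eq_of_differentiableOn
          (hslice₁ t (ne_zero_of_mem_sphere hs₂.ne' ⟨t, ht⟩)) hr₁ hs₁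
    _ = ∮ x in C(0, s₁), ∮ t in C(0, s₂), F (x, t) :=
        (circleIntegral_circleIntegral_swap hF.continuousOn hs₁.ne' hs₂.ne').symm

theorem DifferentiableOn.zpow_mul_zpow_mul
    (hF : DifferentiableOn ℂ F {z : ℂ × ℂ | z.1 ≠ 0 ∧ z.2 ≠ 0}) (k m : ℤ) :
    DifferentiableOn ℂ (fun z => z.1 ^ k * z.2 ^ m * F z) {z : ℂ × ℂ | z.1 ≠ 0 ∧ z.2 ≠ 0} :=
  ((differentiableOn_fst.zpow (.inl fun _ hz => hz.1)).mul
    (differentiableOn_snd.zpow (.inl fun _ hz => hz.2))).mul hF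

theorem circleIntegral_circleIntegral_comp_mul (F : ℂ × ℂ → ℂ) {a₁ a₂ : ℂ} (ha₁ : a₁ ≠ 0)
    (ha₂ : a₂ ≠ 0) (r₁ r₂ : ℝ) :
    (∮ x in C(0, r₁), ∮ t in C(0, r₂), F (a₁ * x, a₂ * t)) =
      a₁⁻¹ * a₂⁻¹ * ∮ x in C(0, ‖a₁‖ * r₁), ∮ t in C(0, ‖a₂‖ * r₂), F (x, t) := by
  have hinner : ∀ x : ℂ, (∮ t in C(0, r₂), F (x, a₂ * t)) =
      a₂⁻¹ * ∮ t in C(0, ‖a₂‖ * r₂), F (x, t) := fun x =>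
    circleIntegral_comp_const_mul (fun t => F (x, t)) ha₂ r₂
  simp only [hinner, circleIntegral.integral_const_mul,
    circleIntegral_comp_const_mul (fun x => ∮ t in C(0, ‖a₂‖ * r₂), F (x, t)) ha₁]
  ring

theorem circleIntegral_circleIntegral_eq_zero_of_comp_mul_eq
    (hF : DifferentiableOn ℂ F {z : ℂ × ℂ | z.1 ≠ 0 ∧ z.2 ≠ 0}) {a₁ a₂ c : ℂ} (ha₁ : a₁ ≠ 0)
    (ha₂ : a₂ ≠ 0) (hFa : ∀ x t : ℂ, x ≠ 0 → t ≠ 0 → F (a₁ * x, a₂ * t) = c * F (x, t))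
    (hc : c * a₁ * a₂ ≠ 1) (hr₁ : 0 < r₁) (hr₂ : 0 < r₂) :
    (∮ x in C(0, r₁), ∮ t in C(0, r₂), F (x, t)) = 0 := by
  have hinvariant : (∮ x in C(0, r₁), ∮ t in C(0, r₂), F (a₁ * x, a₂ * t)) =
      c * ∮ x in C(0, r₁), ∮ t in C(0, r₂), F (x, t) := by
    rw [← circleIntegral.integral_const_mul]
    refine circleIntegral.integral_congr hr₁.le fun x hx => ?_
    rw [← circleIntegral.integral_const_mul]
    exact circleIntegral.integral_congr hr₂.le fun t ht =>
      hFa x t (ne_zero_of_mem_sphere hr₁.ne' ⟨x, hx⟩) (ne_zero_of_mem_sphere hr₂.ne' ⟨t, ht⟩)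
  rw [circleIntegral_circleIntegral_comp_mul F ha₁ ha₂,
    circleIntegral_circleIntegral_eq_of_differentiableOn hF (by positivity) (by positivity) hr₁ hr₂]
    at hinvariant
  have : (c * a₁ * a₂ - 1) * ∮ x in C(0, r₁), ∮ t in C(0, r₂), F (x, t) = 0 := by
    field_simp at hinvariant
    linear_combination -hinvariant
  exact (mul_eq_zero.1 this).resolve_left (sub_ne_zero.2 hc)

theorem eq_of_circleIntegral_circleIntegral_zpow_mul_eq_zero
    (hF : ContinuousOn F {z : ℂ × ℂ | z.1 ≠ 0 ∧ z.2 ≠ 0}) (hr₁ : 0 < r₁) (hr₂ : 0 < r₂)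
    (hmom : ∀ k m : ℤ, (k, m) ≠ (-1, -1) →
      (∮ x in C(0, r₁), ∮ t in C(0, r₂), x ^ k * t ^ m * F (x, t)) = 0)
    (θ φ : ℝ) :
    F (circleMap 0 r₁ θ, circleMap 0 r₂ φ) = (2 * π * I)⁻¹ * ((2 * π * I)⁻¹ *
      ∮ x in C(0, r₁), ∮ t in C(0, r₂), x ^ (-1 : ℤ) * t ^ (-1 : ℤ) * F (x, t)) := by
  set G : ℤ → ℂ → ℂ := fun m x => ∮ t in C(0, r₂), t ^ m * F (x, t)
  have hGmom : ∀ k m : ℤ, (∮ x in C(0, r₁), x ^ k * G m x) =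
      ∮ x in C(0, r₁), ∮ t in C(0, r₂), x ^ k * t ^ m * F (x, t) := by
    intro k m
    simp only [G, ← circleIntegral.integral_const_mul, mul_assoc]
  have hGcont : ∀ m : ℤ, Continuous fun θ => G m (circleMap 0 r₁ θ) := fun m =>
    continuous_circleIntegral_comp_circleMap (F := fun z => z.2 ^ m * F z)
      ((continuousOn_snd.zpow₀ m fun _ hz => Or.inl hz.2).mul hF) hr₁.ne' hr₂.ne'
  have hG : ∀ m : ℤ, m ≠ -1 → G m (circleMap 0 r₁ θ) = 0 := fun m hm =>
    circleMap_eq_zero_of_circleIntegral_zpow_mul_eq_zero hr₁ (hGcont m)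
      (fun k => (hGmom k m).trans (hmom k m (by simp [hm]))) θ
  have hG₁ : G (-1) (circleMap 0 r₁ θ) = (2 * π * I)⁻¹ * ∮ x in C(0, r₁), x ^ (-1 : ℤ) * G (-1) x :=
    circleMap_eq_of_circleIntegral_zpow_mul_eq_zero hr₁ (hGcont (-1))
      (fun k hk => (hGmom k (-1)).trans (hmom k (-1) (by simp [hk]))) θ
  rw [circleMap_eq_of_circleIntegral_zpow_mul_eq_zero hr₂
    ((continuous_comp_circleMap_prod hF hr₁.ne' hr₂.ne').comp
      (continuous_const.prodMk continuous_id)) hG φ]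
  exact congrArg _ (hG₁.trans (by rw [hGmom]))

end TwoVariables

theorem eq_zero_of_zpow_mul_zpow_eq_one {a₁ a₂ : ℂ} (h₁ : ‖a₁‖ < 1) (h₂ : ‖a₂‖ < 1)
    (ha₂ : a₂ ≠ 0) (hres : ∀ k l : ℕ, (k, l) ≠ (0, 0) → a₁ ^ k ≠ a₂ ^ l) {K L : ℤ}
    (h : a₁ ^ K * a₂ ^ L = 1) : K = 0 ∧ L = 0 := by
  wlog hK : 0 ≤ K generalizing K L
  · have := this (K := -K) (L := -L) (by rw [zpow_neg, zpow_neg, ← mul_inv, h, inv_one])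
      (by omega)
    omega
  lift K to ℕ using hK
  rcases le_or_gt L 0 with hL | hL
  · obtain ⟨l, rfl⟩ := Int.exists_eq_neg_ofNat hL
    rw [zpow_neg, zpow_natCast, zpow_natCast, mul_inv_eq_one₀ (pow_ne_zero _ ha₂)] at h
    by_contra hne
    exact hres K l (fun hKl => hne (by simp_all [Prod.ext_iff])) h
  · lift L to ℕ using hL.le
    rw [zpow_natCast, zpow_natCast] at h
    have hnorm : ‖a₁‖ ^ K * ‖a₂‖ ^ L = 1 := by simpa using congrArg norm h
    have : ‖a₁‖ ^ K * ‖a₂‖ ^ L < 1 :=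
      mul_lt_one_of_nonneg_of_lt_one_right (pow_le_one₀ (norm_nonneg _) h₁.le) (by positivity)
        (pow_lt_one₀ (norm_nonneg _) h₂ (by omega))
    linarith

/-- Under the non-resonance condition, a function holomorphic on
`{z₁ ≠ 0, z₂ ≠ 0} ⊂ ℂ²` and invariant under `(z₁,z₂) ↦ (a₁z₁, a₂z₂)` is constant there. -/
theorem stmt_7 (a₁ a₂ : ℂ)
    (h₁ : 0 < ‖a₁‖) (h₁₂ : ‖a₁‖ ≤ ‖a₂‖)
    (h₂ : ‖a₂‖ < 1)
    (hres : ∀ k l : ℕ, (k, l) ≠ (0, 0) → a₁ ^ k ≠ a₂ ^ l)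
    (f : ℂ × ℂ → ℂ)
    (hf : DifferentiableOn ℂ f {z : ℂ × ℂ | z.1 ≠ 0 ∧ z.2 ≠ 0})
    (hinv : ∀ z : ℂ × ℂ, z.1 ≠ 0 → z.2 ≠ 0 → f (a₁ * z.1, a₂ * z.2) = f z) :
    ∀ z w : ℂ × ℂ, z.1 ≠ 0 → z.2 ≠ 0 → w.1 ≠ 0 → w.2 ≠ 0 → f z = f w := by
  have ha₁ : a₁ ≠ 0 := norm_pos_iff.1 h₁
  have ha₂ : a₂ ≠ 0 := norm_pos_iff.1 (h₁.trans_le h₁₂)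
  have hmom : ∀ r₁ r₂ : ℝ, 0 < r₁ → 0 < r₂ → ∀ k m : ℤ, (k, m) ≠ (-1, -1) →
      (∮ x in C(0, r₁), ∮ t in C(0, r₂), x ^ k * t ^ m * f (x, t)) = 0 := by
    intro r₁ r₂ hr₁ hr₂ k m hkm
    refine circleIntegral_circleIntegral_eq_zero_of_comp_mul_eq
      (F := fun z => z.1 ^ k * z.2 ^ m * f z) (c := a₁ ^ k * a₂ ^ m) (hf.zpow_mul_zpow_mul k m)
      ha₁ ha₂ (fun x t hx ht => ?_) (fun hc => hkm ?_) hr₁ hr₂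
    · simp only [hinv (x, t) hx ht, mul_zpow]
      ring
    · have := eq_zero_of_zpow_mul_zpow_eq_one (h₁₂.trans_lt h₂) h₂ ha₂ hres (K := k + 1)
        (L := m + 1) (by rw [zpow_add_one₀ ha₁, zpow_add_one₀ ha₂, ← hc]; ring)
      ext <;> simp <;> omega
  have hf_eq : ∀ z : ℂ × ℂ, z.1 ≠ 0 → z.2 ≠ 0 → f z = (2 * π * I)⁻¹ * ((2 * π * I)⁻¹ *
      ∮ x in C(0, 1), ∮ t in C(0, 1), x ^ (-1 : ℤ) * t ^ (-1 : ℤ) * f (x, t)) := by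
    rintro ⟨x, t⟩ hx ht
    have hx' := norm_pos_iff.2 hx
    have ht' := norm_pos_iff.2 ht
    have hpolar : ∀ u : ℂ, circleMap 0 ‖u‖ (arg u) = u := fun u => by
      rw [circleMap_zero, norm_mul_exp_arg_mul_I]
    rw [← hpolar x, ← hpolar t, eq_of_circleIntegral_circleIntegral_zpow_mul_eq_zero
      hf.continuousOn hx' ht' (hmom _ _ hx' ht'), circleIntegral_circleIntegral_eq_of_differentiableOn
      (hf.zpow_mul_zpow_mul (-1) (-1)) hx' ht' one_pos one_pos]
  intro z w hz₁ hz₂ hw₁ hw₂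
  rw [hf_eq z hz₁ hz₂, hf_eq w hw₁ hw₂]
end

section
/- Let τ be an irrational real number, let c > 0 and θ ∈ ℝ. Consider the subset S = {(c · exp(iθ + τ·w), exp(w)) : w ∈ ℂ} of ℂ². Then the closure of S in ℂ², intersected with the open set {(z₁, z₂) ∈ ℂ² : z₁ ≠ 0 and z₂ ≠ 0}, equals the set {(z₁, z₂) ∈ ℂ² : z₁ ≠ 0, z₂ ≠ 0 and |z₁| = c · |z₂|^τ}. -/
open Complex Set
open scoped Real

/-!
Every point of the leaf satisfies `‖z₁‖ = c‖z₂‖^τ`, a condition that is closed away from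
`z₂ = 0`, so the closure stays in the hypersurface. Conversely, replacing `w` by `w + 2πik`
fixes `z₂ = exp w` and multiplies `z₁` by `exp(2πiτ)^k`; for irrational `τ` these powers are
dense in the unit circle (irrational rotation), so over each `z₂` the closure contains the
whole circle `‖z₁‖ = c‖z₂‖^τ`.
-/

theorem eq_of_mem_closure_of_continuousAt {X Y : Type*} [TopologicalSpace X] [TopologicalSpace Y]
    [T2Space Y] {f g : X → Y} {s : Set X} {x : X} (hx : x ∈ closure s)
    (hf : ContinuousAt f x) (hg : ContinuousAt g x) (hfg : EqOn f g s) : f x = g x :=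
  haveI := mem_closure_iff_nhdsWithin_neBot.1 hx
  tendsto_nhds_unique_of_eventuallyEq (hf.tendsto.mono_left nhdsWithin_le_nhds)
    (hg.tendsto.mono_left nhdsWithin_le_nhds) (eventually_nhdsWithin_of_forall hfg)

theorem mem_closure_range_zpow_exp_of_irrational {τ : ℝ} (hτ : Irrational τ) {z : ℂ}
    (hz : ‖z‖ = 1) : z ∈ closure (range fun k : ℤ => exp (2 * π * τ * I) ^ k) := by
  have hdense : DenseRange (fun k : ℤ => k • (τ : AddCircle (1 : ℝ))) :=
    AddCircle.denseRange_zsmul_coe_iff.2 (by simpa using hτ)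
  have hz_eq : z = (AddCircle.toCircle ((arg z / (2 * π) : ℝ) : AddCircle (1 : ℝ)) : ℂ) := by
    rw [AddCircle.toCircle_apply_mk, Circle.coe_exp, div_one,
      mul_div_cancel₀ _ (by positivity : (2 * π : ℝ) ≠ 0)]
    simpa [hz] using (norm_mul_exp_arg_mul_I z).symm
  rw [hz_eq]
  refine map_mem_closure (f := fun x : AddCircle (1 : ℝ) => (AddCircle.toCircle x : ℂ))
    (continuous_subtype_val.comp AddCircle.continuous_toCircle) (hdense _) ?_
  rintro _ ⟨k, rfl⟩
  exact ⟨k, by simp [AddCircle.toCircle_zsmul, AddCircle.toCircle_apply_mk]⟩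

theorem norm_leaf_fst (τ θ : ℝ) {c : ℝ} (hc : 0 ≤ c) (w : ℂ) :
    ‖(c : ℂ) * exp (θ * I + τ * w)‖ = c * ‖exp w‖ ^ τ := by
  rw [norm_mul, norm_exp, norm_exp, norm_real, Real.norm_of_nonneg hc, ← Real.exp_mul]
  simp [mul_comm]

theorem leaf_fst_add_int_mul_two_pi_I (τ c θ : ℝ) (w : ℂ) (k : ℤ) :
    (c : ℂ) * exp (θ * I + τ * (w + k * (2 * π * I))) =
      (c : ℂ) * exp (θ * I + τ * w) * exp (2 * π * τ * I) ^ k := by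
  rw [show (θ : ℂ) * I + τ * (w + k * (2 * π * I)) = θ * I + τ * w + k * (2 * π * τ * I) by ring,
    exp_add, exp_int_mul, mul_assoc (c : ℂ)]

/-- For irrational `τ`, `c > 0`, `θ ∈ ℝ`, the closure in `ℂ²` of the leaf
`S = {(c·exp(iθ + τw), exp w) : w ∈ ℂ}`, intersected with `{z₁ ≠ 0, z₂ ≠ 0}`, is the
Levi-flat hypersurface `{z₁ ≠ 0, z₂ ≠ 0, |z₁| = c·|z₂|^τ}`. -/
theorem stmt_8 (τ : ℝ) (hτ : Irrational τ) (c : ℝ) (hc : 0 < c) (θ : ℝ) :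
    (closure {p : ℂ × ℂ | ∃ w : ℂ,
        p = ((c : ℂ) * Complex.exp ((θ : ℂ) * Complex.I + (τ : ℂ) * w), Complex.exp w)})
      ∩ {p : ℂ × ℂ | p.1 ≠ 0 ∧ p.2 ≠ 0}
    = {p : ℂ × ℂ | p.1 ≠ 0 ∧ p.2 ≠ 0 ∧
        ‖p.1‖ = c * ‖p.2‖ ^ τ} := by
  ext p
  constructor
  · rintro ⟨hp, h1, h2⟩
    refine ⟨h1, h2, eq_of_mem_closure_of_continuousAt (f := fun q : ℂ × ℂ => ‖q.1‖)
      (g := fun q => c * ‖q.2‖ ^ τ) hp (by fun_prop) ?_ ?_⟩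
    · exact continuousAt_const.mul <|
        (continuous_snd.norm.continuousAt).rpow_const (Or.inl (norm_ne_zero_iff.2 h2))
    · rintro _ ⟨w, rfl⟩
      exact norm_leaf_fst τ θ hc.le w
  · rintro ⟨h1, h2, hp⟩
    set u := (c : ℂ) * exp (θ * I + τ * log p.2)
    have hu : ‖u‖ = ‖p.1‖ := by rw [norm_leaf_fst τ θ hc.le, exp_log h2, hp]
    have hu0 : u ≠ 0 := norm_ne_zero_iff.1 (hu ▸ norm_ne_zero_iff.2 h1)
    refine ⟨?_, h1, h2⟩
    rw [show p = (u * (p.1 / u), p.2) by rw [mul_div_cancel₀ _ hu0]]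
    refine map_mem_closure (f := fun z => (u * z, p.2)) (by fun_prop)
      (mem_closure_range_zpow_exp_of_irrational hτ (z := p.1 / u)
        (by rw [norm_div, hu, div_self (norm_ne_zero_iff.2 h1)])) ?_
    rintro _ ⟨k, rfl⟩
    exact ⟨log p.2 + k * (2 * π * I), by
      rw [leaf_fst_add_int_mul_two_pi_I, exp_periodic.int_mul k, exp_log h2]⟩
end

section
/- Let a₁, a₂ be complex numbers with 0 < |a₁| ≤ |a₂| < 1 such that a₁^k ≠ a₂^l for every pair of natural numbers (k, l) ≠ (0, 0), and let j be a natural number. Let g : ℂ × ℂ → ℂ be an entire function (complex differentiable on all of ℂ²) satisfying g(a₁ z₁, a₂ z₂) = a₁^j · g(z₁, z₂) for all (z₁, z₂) ∈ ℂ². Then there exists c ∈ ℂ such that g(z₁, z₂) = c · z₁^j for all (z₁, z₂) ∈ ℂ². -/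
/-!
Each slice `w ↦ g (z, w)` grows at most like `‖w‖ ^ N` once `‖a₂‖ ^ N ≤ ‖a₁‖ ^ j`: the scaling
brings `w` back to the unit disc at the cost of a factor `‖a₁‖ ^ (-j)` per step. By Cauchy's
estimates the slice is a polynomial of degree `≤ N`, and Lagrange interpolation writes its Taylor
coefficients `E l z` as linear combinations of values of `g`, so they are entire in `z`. The
functional equation gives `a₂ ^ l * E l (a₁ * z) = a₁ ^ j * E l z`, so the `n`-th Taylor
coefficient of `E l` vanishes unless `a₂ ^ l * a₁ ^ n = a₁ ^ j`; by non-resonance and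
`‖a₁‖, ‖a₂‖ < 1` this forces `(n, l) = (j, 0)`.
-/

open Complex Polynomial Finset Metric Filter
open scoped Nat Topology

theorem iteratedDeriv_eq_zero_of_comp_const_mul {𝕜 F : Type*} [NontriviallyNormedField 𝕜]
    [NormedAddCommGroup F] [NormedSpace 𝕜 F] {f : 𝕜 → F} {n : ℕ} (hf : ContDiff 𝕜 n f)
    {a b c : 𝕜} (hfe : ∀ x, c • f (a * x) = b • f x) (hn : c * a ^ n ≠ b) :
    iteratedDeriv n f 0 = 0 := by
  have hcomp : iteratedDeriv n (fun x => c • f (a * x)) 0 = (c * a ^ n) • iteratedDeriv n f 0 := by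
    change iteratedDeriv n (c • fun x => f (a * x)) 0 = _
    rw [iteratedDeriv_const_smul_field, iteratedDeriv_comp_const_smul hf, mul_smul]
    simp only [mul_zero]
  have hrhs : iteratedDeriv n (fun x => c • f (a * x)) 0 = b • iteratedDeriv n f 0 := by
    simp_rw [hfe]
    exact iteratedDeriv_const_smul_field b f
  have := hcomp.symm.trans hrhs
  rw [← sub_eq_zero, ← sub_smul] at this
  exact (smul_eq_zero.mp this).resolve_left (sub_ne_zero.mpr hn)

theorem Lagrange.coeff_eq_sum_eval_mul_coeff_basis {K ι : Type*} [Field K] [DecidableEq ι]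
    {s : Finset ι} {v : ι → K} (hvs : Set.InjOn v s) {p : K[X]} (hp : p.degree < #s) (l : ℕ) :
    p.coeff l = ∑ i ∈ s, p.eval (v i) * (Lagrange.basis s v i).coeff l := by
  conv_lhs => rw [eq_interpolate hvs hp]
  simp only [interpolate_apply, finsetSum_coeff, coeff_C_mul]

namespace Complex

variable {F : Type*} [NormedAddCommGroup F] [NormedSpace ℂ F] [CompleteSpace F]

theorem eq_sum_taylor_of_iteratedDeriv_eq_zero {f : ℂ → F} (hf : Differentiable ℂ f)
    {s : Finset ℕ} (h : ∀ n ∉ s, iteratedDeriv n f 0 = 0) (z : ℂ) :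
    f z = ∑ n ∈ s, (n ! : ℂ)⁻¹ • z ^ n • iteratedDeriv n f 0 :=
  (hasSum_taylorSeries_of_entire hf 0 z).unique <| by
    simpa only [sub_zero] using hasSum_sum_of_ne_finset_zero fun n hn => by simp [h n hn]

theorem iteratedDeriv_eq_zero_of_norm_le_mul_pow {f : ℂ → F} (hf : Differentiable ℂ f) {C : ℝ}
    {N n : ℕ} (hC : ∀ w, 1 ≤ ‖w‖ → ‖f w‖ ≤ C * ‖w‖ ^ N) (hn : N < n) :
    iteratedDeriv n f 0 = 0 := by
  have hbound (R : ℝ) (hR : 1 ≤ R) : ‖iteratedDeriv n f 0‖ ≤ n ! * C / R := by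
    have hR0 : 0 < R := by linarith
    have hRn : R ^ N * R ≤ R ^ n := by
      rw [← pow_succ]
      exact pow_le_pow_right₀ hR hn
    have hC0 : 0 ≤ C := by simpa using (norm_nonneg _).trans (hC 1 (by simp))
    calc ‖iteratedDeriv n f 0‖ ≤ n ! * (C * R ^ N) / R ^ n :=
          norm_iteratedDeriv_le_of_forall_mem_sphere_norm_le n hR0 hf.diffContOnCl fun w hw => by
            rw [mem_sphere_zero_iff_norm] at hw
            simpa [hw] using hC w (hw ▸ hR)
      _ ≤ n ! * (C * R ^ N) / (R ^ N * R) := by gcongr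
      _ = n ! * C / R := by field_simp
  have hlim : Tendsto (fun R : ℝ => n ! * C / R) atTop (𝓝 0) :=
    tendsto_const_nhds.div_atTop tendsto_id
  exact norm_le_zero_iff.mp <|
    ge_of_tendsto hlim (eventually_atTop.mpr ⟨1, hbound⟩)

theorem iteratedDeriv_eq_factorial_mul_sum_lagrange {f : ℂ → ℂ} (hf : Differentiable ℂ f)
    {N : ℕ} (hN : ∀ n, N < n → iteratedDeriv n f 0 = 0) (l : ℕ) :
    iteratedDeriv l f 0 = l ! * ∑ i ∈ range (N + 1),
      f i * (Lagrange.basis (range (N + 1)) (Nat.cast : ℕ → ℂ) i).coeff l := by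
  set p : ℂ[X] := ∑ n ∈ range (N + 1), C ((n ! : ℂ)⁻¹ * iteratedDeriv n f 0) * X ^ n
  have hcoeff (m : ℕ) : p.coeff m = (m ! : ℂ)⁻¹ * iteratedDeriv m f 0 := by
    simp only [p, finsetSum_coeff, coeff_C_mul_X_pow, Finset.sum_ite_eq, mem_range]
    split_ifs with hm
    · rfl
    · rw [hN m (by omega), mul_zero]
  have heval (w : ℂ) : p.eval w = f w := by
    rw [eq_sum_taylor_of_iteratedDeriv_eq_zero hf (s := range (N + 1))
      (fun n hn => hN n (by simpa using hn)) w]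
    simp [p, eval_finsetSum, mul_comm, mul_left_comm]
  have hdeg : p.degree < #(range (N + 1)) := by
    rw [card_range, degree_lt_iff_coeff_zero]
    intro m hm
    rw [hcoeff, hN m (by omega), mul_zero]
  have hlagrange := Lagrange.coeff_eq_sum_eval_mul_coeff_basis Nat.cast_injective.injOn hdeg l
  simp only [hcoeff, heval] at hlagrange
  rw [← hlagrange, mul_inv_cancel_left₀ (Nat.cast_ne_zero.mpr l.factorial_ne_zero)]

end Complex

theorem exists_norm_le_mul_pow_of_map_mul {K F : Type*} [NormedField K] [ProperSpace K]
    [NormedAddCommGroup F] [NormedSpace K F] {a₁ a₂ : K} {j N : ℕ} {g : K × K → F}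
    (hg : Continuous g) (ha₁ : ‖a₁‖ ≤ 1) (ha₂ : 0 < ‖a₂‖) (ha₂' : ‖a₂‖ < 1)
    (hN : ‖a₂‖ ^ N ≤ ‖a₁‖ ^ j) (heq : ∀ z : K × K, g (a₁ * z.1, a₂ * z.2) = a₁ ^ j • g z)
    (z : K) : ∃ C, ∀ w, 1 ≤ ‖w‖ → ‖g (z, w)‖ ≤ C * ‖w‖ ^ N := by
  have hiter (m : ℕ) (w : K) : g (a₁ ^ m * z, a₂ ^ m * w) = (a₁ ^ j) ^ m • g (z, w) := by
    induction m with
    | zero => simp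
    | succ m ih =>
      rw [pow_succ', pow_succ', pow_succ', mul_smul, mul_assoc, mul_assoc, ← ih]
      exact heq (a₁ ^ m * z, a₂ ^ m * w)
  obtain ⟨M, hM⟩ := ((isCompact_closedBall (0 : K) ‖z‖).prod
    (isCompact_closedBall (0 : K) 1)).exists_bound_of_continuousOn hg.continuousOn
  refine ⟨M / ‖a₂‖ ^ N, fun w hw => ?_⟩
  have hw0 : 0 < ‖w‖ := one_pos.trans_le hw
  -- rescale `w` into the annulus `‖a₂‖ ≤ ‖·‖ ≤ 1`
  obtain ⟨m, hm_lt, hm_le⟩ :=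
    exists_nat_pow_near_of_lt_one (inv_pos.mpr hw0) (inv_le_one_of_one_le₀ hw) ha₂ ha₂'
  have hscaled : ‖a₁‖ ^ (j * (m + 1)) * ‖g (z, w)‖ ≤ M := by
    have hmem : (a₁ ^ (m + 1) * z, a₂ ^ (m + 1) * w) ∈ closedBall 0 ‖z‖ ×ˢ closedBall 0 1 := by
      simp only [Set.mem_prod, mem_closedBall_zero_iff, norm_mul, norm_pow]
      constructor
      · exact mul_le_of_le_one_left (norm_nonneg _) (pow_le_one₀ (norm_nonneg _) ha₁)
      · rw [← le_div_iff₀ hw0, one_div]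
        exact hm_lt.le
    simpa [hiter, norm_smul, ← pow_mul] using hM _ hmem
  have hlower : ‖a₂‖ ≤ ‖a₂‖ ^ (m + 1) * ‖w‖ := by
    calc ‖a₂‖ = ‖a₂‖ * (‖w‖⁻¹ * ‖w‖) := by rw [inv_mul_cancel₀ hw0.ne', mul_one]
      _ ≤ ‖a₂‖ * (‖a₂‖ ^ m * ‖w‖) := by gcongr
      _ = ‖a₂‖ ^ (m + 1) * ‖w‖ := by ring
  have hpow : ‖a₂‖ ^ N ≤ ‖a₁‖ ^ (j * (m + 1)) * ‖w‖ ^ N :=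
    calc ‖a₂‖ ^ N ≤ (‖a₂‖ ^ (m + 1) * ‖w‖) ^ N := pow_le_pow_left₀ ha₂.le hlower N
      _ = (‖a₂‖ ^ N) ^ (m + 1) * ‖w‖ ^ N := by ring
      _ ≤ (‖a₁‖ ^ j) ^ (m + 1) * ‖w‖ ^ N := by gcongr
      _ = ‖a₁‖ ^ (j * (m + 1)) * ‖w‖ ^ N := by rw [pow_mul]
  rw [div_mul_eq_mul_div, le_div_iff₀ (pow_pos ha₂ N)]
  calc ‖g (z, w)‖ * ‖a₂‖ ^ N ≤ ‖g (z, w)‖ * (‖a₁‖ ^ (j * (m + 1)) * ‖w‖ ^ N) := by gcongr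
    _ = ‖a₁‖ ^ (j * (m + 1)) * ‖g (z, w)‖ * ‖w‖ ^ N := by ring
    _ ≤ M * ‖w‖ ^ N := by gcongr

theorem differentiable_iteratedDeriv_right_of_norm_le_mul_pow {g : ℂ × ℂ → ℂ}
    (hg : Differentiable ℂ g) {N : ℕ}
    (hgrowth : ∀ z, ∃ C, ∀ w, 1 ≤ ‖w‖ → ‖g (z, w)‖ ≤ C * ‖w‖ ^ N) (l : ℕ) :
    Differentiable ℂ fun z => iteratedDeriv l (fun w => g (z, w)) 0 := by
  have hslice (z : ℂ) : Differentiable ℂ fun w => g (z, w) := hg.comp (by fun_prop)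
  have hpoly (z : ℂ) (n : ℕ) (hn : N < n) : iteratedDeriv n (fun w => g (z, w)) 0 = 0 := by
    obtain ⟨C, hC⟩ := hgrowth z
    exact iteratedDeriv_eq_zero_of_norm_le_mul_pow (hslice z) hC hn
  simp_rw [iteratedDeriv_eq_factorial_mul_sum_lagrange (hslice _) (hpoly _)]
  fun_prop

theorem pow_mul_pow_ne_pow_of_nonresonant {K : Type*} [NormedField K] {a₁ a₂ : K}
    (h₁ : 0 < ‖a₁‖) (h₁' : ‖a₁‖ < 1) (h₂ : ‖a₂‖ ≤ 1)
    (hres : ∀ k l : ℕ, (k, l) ≠ (0, 0) → a₁ ^ k ≠ a₂ ^ l) {j n l : ℕ} (hnl : (n, l) ≠ (j, 0)) :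
    a₂ ^ l * a₁ ^ n ≠ a₁ ^ j := by
  intro h
  rcases le_or_gt n j with hnj | hjn
  · have ha₁n : a₁ ^ n ≠ 0 := pow_ne_zero n (norm_pos_iff.mp h₁)
    refine hres (j - n) l (fun h0 => hnl ?_) (mul_right_cancel₀ ha₁n ?_).symm
    · simp only [Prod.mk.injEq] at h0 ⊢
      omega
    · rw [h, ← pow_add, Nat.sub_add_cancel hnj]
  · have : ‖a₂‖ ^ l * ‖a₁‖ ^ n < ‖a₁‖ ^ j :=
      calc ‖a₂‖ ^ l * ‖a₁‖ ^ n ≤ ‖a₁‖ ^ n :=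
            mul_le_of_le_one_left (by positivity) (pow_le_one₀ (norm_nonneg _) h₂)
        _ < ‖a₁‖ ^ j := pow_lt_pow_right_of_lt_one₀ h₁ h₁' hjn
    rw [← norm_pow, ← norm_pow, ← norm_mul, h, norm_pow] at this
    exact this.false

/-- Under the non-resonance condition, an entire function `g` on `ℂ²` with
`g(a₁z₁, a₂z₂) = a₁^j · g(z₁,z₂)` is of the form `g(z₁,z₂) = c · z₁^j`. -/
theorem stmt_9 (a₁ a₂ : ℂ)
    (h₁ : 0 < ‖a₁‖) (h₁₂ : ‖a₁‖ ≤ ‖a₂‖)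
    (h₂ : ‖a₂‖ < 1)
    (hres : ∀ k l : ℕ, (k, l) ≠ (0, 0) → a₁ ^ k ≠ a₂ ^ l)
    (j : ℕ) (g : ℂ × ℂ → ℂ) (hg : Differentiable ℂ g)
    (heq : ∀ z : ℂ × ℂ, g (a₁ * z.1, a₂ * z.2) = a₁ ^ j * g z) :
    ∃ c : ℂ, ∀ z : ℂ × ℂ, g z = c * z.1 ^ j := by
  obtain ⟨N, hN⟩ := exists_pow_lt_of_lt_one (pow_pos h₁ j) h₂
  have hslice (z : ℂ) : Differentiable ℂ fun w => g (z, w) := hg.comp (by fun_prop)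
  set E : ℕ → ℂ → ℂ := fun l z => iteratedDeriv l (fun w => g (z, w)) 0 with hE
  have hE_diff (l : ℕ) : Differentiable ℂ (E l) :=
    differentiable_iteratedDeriv_right_of_norm_le_mul_pow hg
      (exists_norm_le_mul_pow_of_map_mul hg.continuous (h₁₂.trans h₂.le) (h₁.trans_le h₁₂) h₂
        hN.le heq) l
  have hE_eq (l : ℕ) (z : ℂ) : a₂ ^ l • E l (a₁ * z) = a₁ ^ j • E l z := by
    have := congr_fun (iteratedDeriv_comp_const_mul (n := l) (hslice (a₁ * z)).contDiff a₂) 0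
    simp only [mul_zero, fun w => heq (z, w), iteratedDeriv_const_mul_field] at this
    simpa [hE] using this.symm
  have hcoeff (n l : ℕ) (hnl : (n, l) ≠ (j, 0)) : iteratedDeriv n (E l) 0 = 0 :=
    iteratedDeriv_eq_zero_of_comp_const_mul (hE_diff l).contDiff (hE_eq l)
      (pow_mul_pow_ne_pow_of_nonresonant h₁ (h₁₂.trans_lt h₂) h₂.le hres hnl)
  have hE_zero (l : ℕ) (hl : l ≠ 0) (z : ℂ) : E l z = 0 := by
    simpa using eq_sum_taylor_of_iteratedDeriv_eq_zero (hE_diff l) (s := ∅)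
      (fun n _ => hcoeff n l (by simp [hl])) z
  refine ⟨(j ! : ℂ)⁻¹ * iteratedDeriv j (E 0) 0, fun z => ?_⟩
  have hg_slice := eq_sum_taylor_of_iteratedDeriv_eq_zero (hslice z.1) (s := {0})
    (fun n hn => hE_zero n (by simpa using hn) z.1) z.2
  have hE0 := eq_sum_taylor_of_iteratedDeriv_eq_zero (hE_diff 0) (s := {j})
    (fun n hn => hcoeff n 0 (by simpa using hn)) z.1
  simp only [sum_singleton, smul_eq_mul, Nat.factorial_zero, Nat.cast_one, inv_one, pow_zero,
    one_mul] at hg_slice hE0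
  exact hg_slice.trans (hE0.trans (by ring))
end
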